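/- arXiv:math/9201208 — 4 statements merged into one kernel-verified Lean document; each statement's English description precedes it below -/
import Mathlib

section
/- Define g : (0,1] → ℝ by g(λ) = exp(−log λ − (log λ)²) if 2·log λ > −1, and g(λ) = e^{1/4} otherwise. Then g(λ) ≤ 2 − λ for all 0 < λ ≤ 1. -/
open Real

private lemma exp_ub3 {x : ℝ} (h1 : 0 ≤ x) (h2 : x ≤ 1) :
    Real.exp x ≤ 1 + x + x ^ 2 / 2 + 2 * x ^ 3 / 9 := by
  have := Real.exp_bound' h1 h2 (n := 3) (by norm_num)
  simp [Finset.sum_range_succ, Nat.factorial] at this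
  nlinarith [this]

private lemma exp_neg_ub4 {t : ℝ} (h1 : 0 ≤ t) (h2 : t ≤ 1) :
    Real.exp (-t) ≤ 1 - t + t ^ 2 / 2 - t ^ 3 / 6 + 5 * t ^ 4 / 96 := by
  have habs : |(-t)| ≤ 1 := by rw [abs_neg, abs_of_nonneg h1]; exact h2
  have := Real.exp_bound habs (n := 4) (by norm_num)
  simp [Finset.sum_range_succ, Nat.factorial, abs_neg, abs_of_nonneg h1] at this
  have h' := (abs_sub_le_iff.1 this).1
  nlinarith [h']

theorem stmt_1 (l : ℝ) (h0 : 0 < l) (h1 : l ≤ 1) :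
    (if 2 * Real.log l > -1 then Real.exp (-Real.log l - (Real.log l) ^ 2)
      else Real.exp (1/4)) ≤ 2 - l := by
  have hlog : Real.log l ≤ 0 := Real.log_nonpos h0.le h1
  set t : ℝ := -Real.log l with ht
  have ht0 : 0 ≤ t := by linarith
  have hl : l = Real.exp (-t) := by rw [ht, neg_neg, Real.exp_log h0]
  split_ifs with hc
  · -- 2 log l > -1, so t < 1/2
    have ht2 : t < 1/2 := by simp only [ht]; linarith
    have hu0 : 0 ≤ t - t ^ 2 := by nlinarith
    have hu1 : t - t ^ 2 ≤ 1 := by nlinarith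
    have e1 : Real.exp (-Real.log l - Real.log l ^ 2) = Real.exp (t - t ^ 2) := by
      rw [ht]; ring_nf
    rw [e1, hl]
    have b1 := exp_ub3 hu0 hu1
    have b2 := exp_neg_ub4 ht0 (by linarith)
    have h14 : (0:ℝ) ≤ 1/4 - t^2 := by nlinarith
    nlinarith [b1, b2, mul_nonneg (pow_nonneg ht0 3) h14,
      mul_nonneg (pow_nonneg ht0 3) ht0, pow_nonneg ht0 3,
      mul_nonneg (mul_nonneg (pow_nonneg ht0 3) ht0) h14]
  · -- log l ≤ -1/2, so l ≤ exp(-1/2)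
    push_neg at hc
    have hle : l ≤ Real.exp (-(1/2)) := by
      rw [← Real.exp_log h0]; exact Real.exp_le_exp.2 (by linarith)
    have b1 := exp_ub3 (x := 1/4) (by norm_num) (by norm_num)
    have b2 := exp_neg_ub4 (t := 1/2) (by norm_num) (by norm_num)
    norm_num at b1 b2 ⊢
    linarith
end

section
/- In the setting of Theorem 1, for A ⊆ Ω₁×⋯×Ωₙ₊₁, w ∈ Ωₙ₊₁, and A_w = {t : (t,w) ∈ A}, the following hold for any v,w ∈ Ωₙ₊₁: (1) φ_A(t,v)² ≤ φ_{A_v}(t)², and (2) for w ≠ v, φ_A(t,w)² ≤ inf_{0 ≤ α ≤ 1} [α·φ_{A_w}(t)² + (1−α)·φ_{A_v}(t)² + (1−α)²]. -/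
/-- Squaring the infimum of square roots gives the infimum of the original set. -/
lemma sq_sInf_sqrt {H : Set ℝ} (hne : H.Nonempty) (h0 : ∀ e ∈ H, 0 ≤ e) :
    (sInf {d : ℝ | ∃ e ∈ H, d = Real.sqrt e}) ^ 2 = sInf H := by
  have himg : {d : ℝ | ∃ e ∈ H, d = Real.sqrt e} = Real.sqrt '' H := by
    ext d
    simp only [Set.mem_setOf_eq, Set.mem_image]
    constructor
    · rintro ⟨e, he, rfl⟩; exact ⟨e, he, rfl⟩
    · rintro ⟨e, he, rfl⟩; exact ⟨e, he, rfl⟩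
  have hbdd : BddBelow H := ⟨0, fun x hx => h0 x hx⟩
  have hmono : Monotone Real.sqrt := fun a b h => Real.sqrt_le_sqrt h
  have hkey : Real.sqrt (sInf H) = sInf (Real.sqrt '' H) :=
    hmono.map_csInf_of_continuousAt Real.continuous_sqrt.continuousAt hne hbdd
  rw [himg, ← hkey, Real.sq_sqrt (Real.sInf_nonneg h0)]

/-- Infimum combination lemma. -/
lemma combo_sInf_le {S T : Set ℝ} (hS : S.Nonempty) (hT : T.Nonempty)
    (hSb : BddBelow S) (hTb : BddBelow T) {a b c L : ℝ} (ha : 0 ≤ a) (hb : 0 ≤ b)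
    (h : ∀ e ∈ S, ∀ e' ∈ T, L ≤ a * e + b * e' + c) :
    L ≤ a * sInf S + b * sInf T + c := by
  refine le_of_forall_pos_le_add fun ε hε => ?_
  have hδ : (0 : ℝ) < ε / (a + b + 1) := by positivity
  obtain ⟨e, heS, he⟩ := Real.lt_sInf_add_pos hS hδ
  obtain ⟨e', heT, he'⟩ := Real.lt_sInf_add_pos hT hδ
  have h1 := h e heS e' heT
  have h2 : a * e ≤ a * (sInf S + ε / (a + b + 1)) := mul_le_mul_of_nonneg_left he.le ha
  have h3 : b * e' ≤ b * (sInf T + ε / (a + b + 1)) := mul_le_mul_of_nonneg_left he'.le hb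
  have h4 : (a + b) * (ε / (a + b + 1)) ≤ ε := by
    have hpos : (0:ℝ) < a + b + 1 := by linarith
    calc (a + b) * (ε / (a + b + 1)) ≤ (a + b + 1) * (ε / (a + b + 1)) :=
          mul_le_mul_of_nonneg_right (by linarith) hδ.le
      _ = ε := by rw [mul_comm, div_mul_cancel₀ _ hpos.ne']
  nlinarith

/-- The linear map `t ↦ Fin.snoc t 0`. -/
def snocLM {n : ℕ} {X : Fin (n + 1) → Type*} [∀ i, NormedAddCommGroup (X i)]
    [∀ i, NormedSpace ℝ (X i)] :
    (∀ i : Fin n, X i.castSucc) →ₗ[ℝ] (∀ i, X i) where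
  toFun t := Fin.snoc t 0
  map_add' t t' := by
    funext i
    refine Fin.lastCases ?_ (fun j => ?_) i <;> simp [Fin.snoc_last, Fin.snoc_castSucc]
  map_smul' c t := by
    funext i
    refine Fin.lastCases ?_ (fun j => ?_) i <;> simp [Fin.snoc_last, Fin.snoc_castSucc]

/-- The affine map `t ↦ Fin.snoc t v`. -/
def snocAM {n : ℕ} {X : Fin (n + 1) → Type*} [∀ i, NormedAddCommGroup (X i)]
    [∀ i, NormedSpace ℝ (X i)] (v : X (Fin.last n)) :
    (∀ i : Fin n, X i.castSucc) →ᵃ[ℝ] (∀ i, X i) where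
  toFun t := Fin.snoc t v
  linear := snocLM
  map_vadd' p t := by
    funext i
    refine Fin.lastCases ?_ (fun j => ?_) i <;>
      simp [snocLM, Fin.snoc_last, Fin.snoc_castSucc]

lemma snoc_mem_convexHull {n : ℕ} {X : Fin (n + 1) → Type*}
    [∀ i, NormedAddCommGroup (X i)] [∀ i, NormedSpace ℝ (X i)]
    (A : Set (∀ i, X i)) (v : X (Fin.last n))
    {z : ∀ i : Fin n, X i.castSucc}
    (hz : z ∈ convexHull ℝ {u : ∀ i : Fin n, X i.castSucc | Fin.snoc u v ∈ A}) :
    Fin.snoc z v ∈ convexHull ℝ A := by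
  have h1 : (snocAM (X := X) v) z ∈
      (snocAM (X := X) v) '' (convexHull ℝ {u | Fin.snoc u v ∈ A}) :=
    Set.mem_image_of_mem _ hz
  rw [AffineMap.image_convexHull] at h1
  have h2 : (snocAM (X := X) v) '' {u | Fin.snoc u v ∈ A} ⊆ A := by
    rintro x ⟨u, hu, rfl⟩; exact hu
  exact convexHull_mono h2 h1

/-- Inequalities (1) and (2) in the proof of Theorem 1, for sections of a set
`A` in an (n+1)-fold product, with distances to convex hulls in ℓ²-sum norms. -/
theorem stmt_6 {n : ℕ} {X : Fin (n + 1) → Type*} [∀ i, NormedAddCommGroup (X i)]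
    [∀ i, NormedSpace ℝ (X i)]
    (Ω : ∀ i, Finset (X i))
    (hdiam : ∀ i, Metric.diam (Ω i : Set (X i)) ≤ 1)
    (A : Set (∀ i, X i)) (hAΩ : A ⊆ ↑(Fintype.piFinset Ω))
    (v w : X (Fin.last n))
    (hv : v ∈ Ω (Fin.last n)) (hw : w ∈ Ω (Fin.last n))
    (hAv : {t : ∀ i : Fin n, X i.castSucc | Fin.snoc t v ∈ A}.Nonempty)
    (hAw : {t : ∀ i : Fin n, X i.castSucc | Fin.snoc t w ∈ A}.Nonempty) :
    (∀ t : ∀ i : Fin n, X i.castSucc,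
      (sInf {d : ℝ | ∃ s ∈ convexHull ℝ A,
          d = Real.sqrt (∑ i, ‖Fin.snoc t v i - s i‖ ^ 2)}) ^ 2
        ≤ (sInf {d : ℝ | ∃ s ∈ convexHull ℝ
              {u : ∀ i : Fin n, X i.castSucc | Fin.snoc u v ∈ A},
            d = Real.sqrt (∑ i, ‖t i - s i‖ ^ 2)}) ^ 2) ∧
    (w ≠ v → ∀ t : ∀ i : Fin n, X i.castSucc, ∀ α ∈ Set.Icc (0 : ℝ) 1,
      (sInf {d : ℝ | ∃ s ∈ convexHull ℝ A,
          d = Real.sqrt (∑ i, ‖Fin.snoc t w i - s i‖ ^ 2)}) ^ 2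
        ≤ α * (sInf {d : ℝ | ∃ s ∈ convexHull ℝ
                {u : ∀ i : Fin n, X i.castSucc | Fin.snoc u w ∈ A},
              d = Real.sqrt (∑ i, ‖t i - s i‖ ^ 2)}) ^ 2
          + (1 - α) * (sInf {d : ℝ | ∃ s ∈ convexHull ℝ
                {u : ∀ i : Fin n, X i.castSucc | Fin.snoc u v ∈ A},
              d = Real.sqrt (∑ i, ‖t i - s i‖ ^ 2)}) ^ 2
          + (1 - α) ^ 2) := by
  classical
  set Av : Set (∀ i : Fin n, X i.castSucc) := {u | Fin.snoc u v ∈ A} with hAvdef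
  set Aw : Set (∀ i : Fin n, X i.castSucc) := {u | Fin.snoc u w ∈ A} with hAwdef
  have hAne : A.Nonempty := by
    obtain ⟨t0, ht0⟩ := hAv
    exact ⟨Fin.snoc t0 v, ht0⟩
  have hCA : (convexHull ℝ A).Nonempty := hAne.mono (subset_convexHull ℝ A)
  have hCAv : (convexHull ℝ Av).Nonempty := hAv.mono (subset_convexHull ℝ Av)
  have hCAw : (convexHull ℝ Aw).Nonempty := hAw.mono (subset_convexHull ℝ Aw)
  -- squared-distance sets
  have sqrw : ∀ (x : ∀ i, X i),
      (sInf {d : ℝ | ∃ s ∈ convexHull ℝ A,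
          d = Real.sqrt (∑ i, ‖x i - s i‖ ^ 2)}) ^ 2
        = sInf {e : ℝ | ∃ s ∈ convexHull ℝ A, e = ∑ i, ‖x i - s i‖ ^ 2} := by
    intro x
    have h1 : {d : ℝ | ∃ s ∈ convexHull ℝ A, d = Real.sqrt (∑ i, ‖x i - s i‖ ^ 2)}
        = {d : ℝ |
            ∃ e ∈ {e : ℝ | ∃ s ∈ convexHull ℝ A, e = ∑ i, ‖x i - s i‖ ^ 2},
            d = Real.sqrt e} := by
      ext d
      simp only [Set.mem_setOf_eq]
      constructor
      · rintro ⟨s, hs, rfl⟩; exact ⟨_, ⟨s, hs, rfl⟩, rfl⟩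
      · rintro ⟨e, ⟨s, hs, rfl⟩, rfl⟩; exact ⟨s, hs, rfl⟩
    rw [h1, sq_sInf_sqrt]
    · obtain ⟨s, hs⟩ := hCA; exact ⟨_, s, hs, rfl⟩
    · rintro e ⟨s, hs, rfl⟩; positivity
  have sqrs : ∀ (B : Set (∀ i : Fin n, X i.castSucc)) (_ : (convexHull ℝ B).Nonempty)
      (t : ∀ i : Fin n, X i.castSucc),
      (sInf {d : ℝ | ∃ s ∈ convexHull ℝ B,
          d = Real.sqrt (∑ i, ‖t i - s i‖ ^ 2)}) ^ 2
        = sInf {e : ℝ | ∃ s ∈ convexHull ℝ B, e = ∑ i, ‖t i - s i‖ ^ 2} := by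
    intro B hB t
    have h1 : {d : ℝ | ∃ s ∈ convexHull ℝ B, d = Real.sqrt (∑ i, ‖t i - s i‖ ^ 2)}
        = {d : ℝ |
            ∃ e ∈ {e : ℝ | ∃ s ∈ convexHull ℝ B, e = ∑ i, ‖t i - s i‖ ^ 2},
            d = Real.sqrt e} := by
      ext d
      simp only [Set.mem_setOf_eq]
      constructor
      · rintro ⟨s, hs, rfl⟩; exact ⟨_, ⟨s, hs, rfl⟩, rfl⟩
      · rintro ⟨e, ⟨s, hs, rfl⟩, rfl⟩; exact ⟨s, hs, rfl⟩
    rw [h1, sq_sInf_sqrt]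
    · obtain ⟨s, hs⟩ := hB; exact ⟨_, s, hs, rfl⟩
    · rintro e ⟨s, hs, rfl⟩; positivity
  have hbddA : ∀ (x : ∀ i, X i),
      BddBelow {e : ℝ | ∃ s ∈ convexHull ℝ A, e = ∑ i, ‖x i - s i‖ ^ 2} := by
    intro x
    refine ⟨0, ?_⟩
    rintro e ⟨s, hs, rfl⟩; positivity
  constructor
  · -- Part (1)
    intro t
    rw [sqrw (Fin.snoc t v), sqrs Av hCAv t]
    refine csInf_le_csInf (hbddA _) ?_ ?_
    · obtain ⟨s, hs⟩ := hCAv; exact ⟨_, s, hs, rfl⟩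
    · rintro e ⟨s', hs', rfl⟩
      refine ⟨Fin.snoc s' v, snoc_mem_convexHull A v hs', ?_⟩
      rw [Fin.sum_univ_castSucc]
      simp [Fin.snoc_castSucc, Fin.snoc_last]
  · -- Part (2)
    intro _ t α hα
    obtain ⟨hα0, hα1⟩ := hα
    have hb0 : (0 : ℝ) ≤ 1 - α := by linarith
    rw [sqrw (Fin.snoc t w), sqrs Aw hCAw t, sqrs Av hCAv t]
    refine combo_sInf_le ?_ ?_ ?_ ?_ hα0 hb0 ?_
    · obtain ⟨s, hs⟩ := hCAw; exact ⟨_, s, hs, rfl⟩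
    · obtain ⟨s, hs⟩ := hCAv; exact ⟨_, s, hs, rfl⟩
    · refine ⟨0, ?_⟩; rintro e ⟨s, hs, rfl⟩; positivity
    · refine ⟨0, ?_⟩; rintro e ⟨s, hs, rfl⟩; positivity
    rintro e ⟨s, hs, rfl⟩ e' ⟨s', hs', rfl⟩
    set p : ∀ i, X i := α • Fin.snoc s w + (1 - α) • Fin.snoc s' v with hp
    have hpA : p ∈ convexHull ℝ A :=
      (convex_convexHull ℝ A) (snoc_mem_convexHull A w hs)
        (snoc_mem_convexHull A v hs') hα0 hb0 (by ring)
    have hle : sInf {e : ℝ | ∃ s ∈ convexHull ℝ A, e = ∑ i, ‖Fin.snoc t w i - s i‖ ^ 2}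
        ≤ ∑ i, ‖Fin.snoc t w i - p i‖ ^ 2 :=
      csInf_le (hbddA _) ⟨p, hpA, rfl⟩
    have hwv : ‖w - v‖ ≤ 1 := by
      have hb : Bornology.IsBounded ((Ω (Fin.last n) : Set (X (Fin.last n)))) :=
        (Ω (Fin.last n)).finite_toSet.isBounded
      have := Metric.dist_le_diam_of_mem hb hw hv
      rw [dist_eq_norm] at this
      exact this.trans (hdiam (Fin.last n))
    have hsum : ∑ i, ‖Fin.snoc t w i - p i‖ ^ 2
        ≤ α * (∑ i, ‖t i - s i‖ ^ 2) + (1 - α) * (∑ i, ‖t i - s' i‖ ^ 2)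
          + (1 - α) ^ 2 := by
      rw [Fin.sum_univ_castSucc]
      have hcoord : ∀ i : Fin n,
          ‖Fin.snoc t w i.castSucc - p i.castSucc‖ ^ 2
            ≤ α * ‖t i - s i‖ ^ 2 + (1 - α) * ‖t i - s' i‖ ^ 2 := by
        intro i
        have hpc : p i.castSucc = α • s i + (1 - α) • s' i := by
          simp [hp, Fin.snoc_castSucc]
        have heq : Fin.snoc t w i.castSucc - p i.castSucc
            = α • (t i - s i) + (1 - α) • (t i - s' i) := by
          rw [hpc, Fin.snoc_castSucc]
          module
        have hn : ‖Fin.snoc t w i.castSucc - p i.castSucc‖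
            ≤ α * ‖t i - s i‖ + (1 - α) * ‖t i - s' i‖ := by
          rw [heq]
          refine (norm_add_le _ _).trans ?_
          rw [norm_smul, norm_smul, Real.norm_eq_abs, Real.norm_eq_abs,
            abs_of_nonneg hα0, abs_of_nonneg hb0]
        have h1 : (0 : ℝ) ≤ ‖Fin.snoc t w i.castSucc - p i.castSucc‖ := norm_nonneg _
        have h2 : (0 : ℝ) ≤ ‖t i - s i‖ := norm_nonneg _
        have h3 : (0 : ℝ) ≤ ‖t i - s' i‖ := norm_nonneg _
        have hsq : ‖Fin.snoc t w i.castSucc - p i.castSucc‖ ^ 2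
            ≤ (α * ‖t i - s i‖ + (1 - α) * ‖t i - s' i‖) ^ 2 :=
          pow_le_pow_left₀ h1 hn 2
        nlinarith [mul_nonneg (mul_nonneg hα0 hb0)
          (sq_nonneg (‖t i - s i‖ - ‖t i - s' i‖))]
      have hlast : ‖Fin.snoc t w (Fin.last n) - p (Fin.last n)‖ ^ 2 ≤ (1 - α) ^ 2 := by
        have hpl : p (Fin.last n) = α • w + (1 - α) • v := by
          simp [hp, Fin.snoc_last]
        have heq : Fin.snoc t w (Fin.last n) - p (Fin.last n) = (1 - α) • (w - v) := by
          rw [hpl, Fin.snoc_last]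
          module
        rw [heq, norm_smul, Real.norm_eq_abs, abs_of_nonneg hb0]
        have hm2 : ‖w - v‖ ^ 2 ≤ 1 := by nlinarith [norm_nonneg (w - v)]
        nlinarith [sq_nonneg (1 - α), hm2]
      have hsum1 : ∑ i : Fin n, ‖Fin.snoc t w i.castSucc - p i.castSucc‖ ^ 2
          ≤ α * (∑ i, ‖t i - s i‖ ^ 2) + (1 - α) * (∑ i, ‖t i - s' i‖ ^ 2) := by
        rw [Finset.mul_sum, Finset.mul_sum, ← Finset.sum_add_distrib]
        exact Finset.sum_le_sum fun i _ => hcoord i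
      linarith
    linarith
end

section
/- Let Ω = {0,1}ⁿ with product measure P = ((1−η)δ₀ + η·δ₁)ⁿ for 0 < η < 1, viewed as a subset of ℓ²ₙ. For nonempty A ⊆ Ω and φ_A(t) = dist₂(t, conv A), one has E[exp(φ_A²/4)] ≤ 1/P(A). -/
open Real Finset

namespace TalaWork

variable {n : ℕ}





noncomputable def cube (n : ℕ) : Finset (Fin n → ℝ) :=
  Fintype.piFinset fun _ => ({0, 1} : Finset ℝ)

noncomputable def wgt (η : ℝ) {n : ℕ} (t : Fin n → ℝ) : ℝ :=
  ∏ i, if t i = 1 then η else 1 - η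

noncomputable def psi {n : ℕ} (A : Finset (Fin n → ℝ)) (t : Fin n → ℝ) : ℝ :=
  sInf {d : ℝ | ∃ s ∈ convexHull ℝ (A : Set (Fin n → ℝ)), d = ∑ i, (t i - s i) ^ 2}

lemma psi_set_nonempty {n : ℕ} {A : Finset (Fin n → ℝ)} (hA : A.Nonempty) (t : Fin n → ℝ) :
    {d : ℝ | ∃ s ∈ convexHull ℝ (A : Set (Fin n → ℝ)), d = ∑ i, (t i - s i) ^ 2}.Nonempty := by
  obtain ⟨a, ha⟩ := hA
  exact ⟨_, a, subset_convexHull ℝ _ ha, rfl⟩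

lemma psi_set_bddBelow {n : ℕ} (A : Finset (Fin n → ℝ)) (t : Fin n → ℝ) :
    BddBelow {d : ℝ | ∃ s ∈ convexHull ℝ (A : Set (Fin n → ℝ)), d = ∑ i, (t i - s i) ^ 2} := by
  refine ⟨0, fun d hd => ?_⟩
  obtain ⟨s, _, rfl⟩ := hd
  positivity

lemma psi_nonneg {n : ℕ} {A : Finset (Fin n → ℝ)} (hA : A.Nonempty) (t : Fin n → ℝ) :
    0 ≤ psi A t := by
  refine le_csInf (psi_set_nonempty hA t) fun d hd => ?_
  obtain ⟨s, _, rfl⟩ := hd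
  positivity

lemma psi_le {n : ℕ} {A : Finset (Fin n → ℝ)} {t s : Fin n → ℝ}
    (hs : s ∈ convexHull ℝ (A : Set (Fin n → ℝ))) :
    psi A t ≤ ∑ i, (t i - s i) ^ 2 :=
  csInf_le (psi_set_bddBelow A t) ⟨s, hs, rfl⟩

/-- the helper for taking infs inside affine bounds -/
lemma le_mul_sInf {S : Set ℝ} {a l C : ℝ} (hl : 0 ≤ l) (hS : S.Nonempty) (hbd : BddBelow S)
    (h : ∀ d ∈ S, a ≤ l * d + C) : a ≤ l * sInf S + C := by
  rcases eq_or_lt_of_le hl with rfl | hl'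
  · obtain ⟨d, hd⟩ := hS
    simpa using h d hd
  · have h2 : (a - C) / l ≤ sInf S := by
      refine le_csInf hS fun d hd => ?_
      rw [div_le_iff₀ hl']
      nlinarith [h d hd]
    rw [div_le_iff₀ hl'] at h2
    linarith


noncomputable def consL : (Fin n → ℝ) →ₗ[ℝ] (Fin (n + 1) → ℝ) where
  toFun x := Fin.cons (0 : ℝ) x
  map_add' x y := by
    funext i
    refine Fin.cases ?_ (fun j => ?_) i <;> simp
  map_smul' m x := by
    funext i
    refine Fin.cases ?_ (fun j => ?_) i <;> simp

/-- `Fin.cons c` as an affine map. -/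
noncomputable def consMap (c : ℝ) : (Fin n → ℝ) →ᵃ[ℝ] (Fin (n + 1) → ℝ) where
  toFun x := Fin.cons c x
  linear := consL
  map_vadd' p v := by
    funext i
    refine Fin.cases ?_ (fun j => ?_) i <;>
      simp [consL, vadd_eq_add]

@[simp] lemma consMap_apply (c : ℝ) (x : Fin n → ℝ) : consMap c x = Fin.cons c x := rfl

/-- `Fin.tail` as a linear map. -/
noncomputable def tailMap : (Fin (n + 1) → ℝ) →ₗ[ℝ] (Fin n → ℝ) :=
  LinearMap.funLeft ℝ ℝ Fin.succ

lemma tailMap_apply (t : Fin (n + 1) → ℝ) : tailMap t = Fin.tail t := rfl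

noncomputable def slice (c : ℝ) (A : Finset (Fin (n + 1) → ℝ)) : Finset (Fin n → ℝ) :=
  (A.filter fun t => t 0 = c).image Fin.tail

noncomputable def proj (A : Finset (Fin (n + 1) → ℝ)) : Finset (Fin n → ℝ) :=
  A.image Fin.tail

lemma lift_cons {c : ℝ} {A : Finset (Fin (n + 1) → ℝ)} {u : Fin n → ℝ}
    (hu : u ∈ convexHull ℝ ((slice c A : Finset (Fin n → ℝ)) : Set (Fin n → ℝ))) :
    Fin.cons c u ∈ convexHull ℝ (A : Set (Fin (n + 1) → ℝ)) := by
  have himg : (consMap c) '' ((slice c A : Finset (Fin n → ℝ)) : Set (Fin n → ℝ))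
      = ((A.filter fun t => t 0 = c : Finset (Fin (n+1) → ℝ)) : Set (Fin (n+1) → ℝ)) := by
    rw [slice, coe_image, ← Set.image_comp]
    ext t
    simp only [Set.mem_image, Finset.mem_coe, Finset.mem_filter, Function.comp_apply,
      consMap_apply]
    constructor
    · rintro ⟨a, ha, rfl⟩
      rw [show Fin.cons c (Fin.tail a) = a by rw [← ha.2, Fin.cons_self_tail]]
      exact ha
    · intro ht
      exact ⟨t, ht, by rw [← ht.2, Fin.cons_self_tail]⟩
  have h1 : Fin.cons c u ∈ (consMap c) '' (convexHull ℝ ((slice c A : Finset _) : Set _)) :=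
    ⟨u, hu, rfl⟩
  rw [AffineMap.image_convexHull, himg] at h1
  exact convexHull_mono (by exact_mod_cast Finset.filter_subset _ _) h1

lemma lift_proj {A : Finset (Fin (n + 1) → ℝ)} {s : Fin n → ℝ}
    (hs : s ∈ convexHull ℝ ((proj A : Finset (Fin n → ℝ)) : Set (Fin n → ℝ))) :
    ∃ p ∈ convexHull ℝ (A : Set (Fin (n + 1) → ℝ)), Fin.tail p = s := by
  have h : ((proj A : Finset (Fin n → ℝ)) : Set (Fin n → ℝ)) = tailMap '' (A : Set _) := by
    rw [proj, coe_image]; rfl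
  rw [h, ← LinearMap.image_convexHull] at hs
  obtain ⟨p, hp, hps⟩ := hs
  exact ⟨p, hp, hps⟩

lemma coord_mem_Icc {A : Finset (Fin (n + 1) → ℝ)}
    (hAΩ : A ⊆ Fintype.piFinset fun _ => ({0, 1} : Finset ℝ))
    {p : Fin (n + 1) → ℝ} (hp : p ∈ convexHull ℝ (A : Set (Fin (n + 1) → ℝ))) :
    p 0 ∈ Set.Icc (0 : ℝ) 1 := by
  have hconv : Convex ℝ {q : Fin (n + 1) → ℝ | q 0 ∈ Set.Icc (0 : ℝ) 1} := by
    have := (convex_Icc (0 : ℝ) 1).linear_preimage (LinearMap.proj (R := ℝ)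
      (φ := fun _ : Fin (n + 1) => ℝ) 0)
    exact this
  have hsub : (A : Set (Fin (n + 1) → ℝ)) ⊆ {q | q 0 ∈ Set.Icc (0 : ℝ) 1} := by
    intro t ht
    have h2 := hAΩ ht
    rw [Fintype.mem_piFinset] at h2
    have h0 := h2 0
    simp only [Finset.mem_insert, Finset.mem_singleton] at h0
    rcases h0 with h | h <;> simp [h]
  exact convexHull_min hsub hconv hp


lemma psi_def (A : Finset (Fin n → ℝ)) (t : Fin n → ℝ) :
    psi A t = sInf {d : ℝ | ∃ s ∈ convexHull ℝ (A : Set (Fin n → ℝ)),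
      d = ∑ i, (t i - s i) ^ 2} := rfl

lemma psi_combine {A : Finset (Fin (n + 1) → ℝ)}
    (hAΩ : A ⊆ Fintype.piFinset fun _ => ({0, 1} : Finset ℝ))
    {c : ℝ} (hc : c = 0 ∨ c = 1) {l : ℝ} (hl : 0 ≤ l) (hl1 : l ≤ 1)
    (hsl : (slice c A).Nonempty) (x : Fin n → ℝ) :
    psi A (Fin.cons c x) ≤ l * psi (slice c A) x + (1 - l) * psi (proj A) x + (1 - l) ^ 2 := by
  have hpr : (proj A).Nonempty := by
    obtain ⟨u, hu⟩ := hsl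
    rw [slice] at hu
    obtain ⟨t, ht, rfl⟩ := Finset.mem_image.1 hu
    exact ⟨Fin.tail t, Finset.mem_image_of_mem _ (Finset.mem_filter.1 ht).1⟩
  rw [psi_def (slice c A) x, psi_def (proj A) x]
  have key : ∀ d1 ∈ {d : ℝ | ∃ s ∈ convexHull ℝ ((slice c A : Finset _) : Set (Fin n → ℝ)),
      d = ∑ i, (x i - s i) ^ 2},
      psi A (Fin.cons c x) ≤ l * d1 +
        ((1 - l) * sInf {d : ℝ | ∃ s ∈ convexHull ℝ ((proj A : Finset _) : Set (Fin n → ℝ)),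
          d = ∑ i, (x i - s i) ^ 2} + (1 - l) ^ 2) := by
    rintro d1 ⟨u, hu, rfl⟩
    have key2 : ∀ d2 ∈ {d : ℝ | ∃ s ∈ convexHull ℝ ((proj A : Finset _) : Set (Fin n → ℝ)),
        d = ∑ i, (x i - s i) ^ 2},
        psi A (Fin.cons c x) ≤ (1 - l) * d2 + (l * (∑ i, (x i - u i) ^ 2) + (1 - l) ^ 2) := by
      rintro d2 ⟨s, hs, rfl⟩
      obtain ⟨p, hp, hps⟩ := lift_proj hs
      have h0 := coord_mem_Icc hAΩ hp
      set q : Fin (n + 1) → ℝ := l • (Fin.cons c u : Fin (n+1) → ℝ) + (1 - l) • p with hq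
      have hqmem : q ∈ convexHull ℝ (A : Set (Fin (n + 1) → ℝ)) :=
        (convex_convexHull ℝ _) (lift_cons hu) hp hl (by linarith) (by ring)
      have hle := psi_le (t := (Fin.cons c x : Fin (n+1) → ℝ)) hqmem
      have hsum : ∑ i, ((Fin.cons c x : Fin (n+1) → ℝ) i - q i) ^ 2
          = (c - (l * c + (1 - l) * p 0)) ^ 2
            + ∑ j : Fin n, (x j - (l * u j + (1 - l) * s j)) ^ 2 := by
        have e0 : (Fin.cons c x : Fin (n+1) → ℝ) 0 - q 0 = c - (l * c + (1 - l) * p 0) := by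
          simp [hq]
        have es : ∀ j : Fin n, (Fin.cons c x : Fin (n+1) → ℝ) j.succ - q j.succ
            = x j - (l * u j + (1 - l) * s j) := by
          intro j
          have hpj : p j.succ = s j := by rw [← hps]; rfl
          simp [hq, hpj]
        rw [Fin.sum_univ_succ, e0]
        exact congrArg _ (Finset.sum_congr rfl fun j _ => by rw [es j])
      have h0' : (c - (l * c + (1 - l) * p 0)) ^ 2 ≤ (1 - l) ^ 2 := by
        obtain ⟨hp0, hp1⟩ := h0
        rcases hc with rfl | rfl
        · have hp2 : (p 0) ^ 2 ≤ 1 := by nlinarith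
          nlinarith [mul_le_mul_of_nonneg_left hp2 (sq_nonneg (1 - l))]
        · have hq2 : (1 - p 0) ^ 2 ≤ 1 := by nlinarith
          nlinarith [mul_le_mul_of_nonneg_left hq2 (sq_nonneg (1 - l))]
      have hterm : ∀ j : Fin n, (x j - (l * u j + (1 - l) * s j)) ^ 2
          ≤ l * (x j - u j) ^ 2 + (1 - l) * (x j - s j) ^ 2 := by
        intro j
        nlinarith [mul_nonneg (mul_nonneg hl (sub_nonneg.2 hl1))
          (sq_nonneg ((x j - u j) - (x j - s j)))]
      have hsum2 : ∑ j : Fin n, (x j - (l * u j + (1 - l) * s j)) ^ 2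
          ≤ l * (∑ j, (x j - u j) ^ 2) + (1 - l) * (∑ j, (x j - s j) ^ 2) := by
        rw [Finset.mul_sum, Finset.mul_sum, ← Finset.sum_add_distrib]
        exact Finset.sum_le_sum fun j _ => hterm j
      calc psi A (Fin.cons c x) ≤ ∑ i, ((Fin.cons c x : Fin (n+1) → ℝ) i - q i) ^ 2 := hle
        _ = (c - (l * c + (1 - l) * p 0)) ^ 2
            + ∑ j : Fin n, (x j - (l * u j + (1 - l) * s j)) ^ 2 := hsum
        _ ≤ (1 - l) ^ 2 + (l * (∑ j, (x j - u j) ^ 2) + (1 - l) * (∑ j, (x j - s j) ^ 2)) := by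
            linarith
        _ = (1 - l) * (∑ i, (x i - s i) ^ 2) + (l * (∑ i, (x i - u i) ^ 2) + (1 - l) ^ 2) := by
            ring
    have := le_mul_sInf (by linarith : (0:ℝ) ≤ 1 - l) (psi_set_nonempty hpr x)
      (psi_set_bddBelow _ x) key2
    linarith
  have := le_mul_sInf hl (psi_set_nonempty hsl x) (psi_set_bddBelow _ x) key
  linarith

lemma psi_proj_bound {A : Finset (Fin (n + 1) → ℝ)} (hA : A.Nonempty)
    (hAΩ : A ⊆ Fintype.piFinset fun _ => ({0, 1} : Finset ℝ))
    {c : ℝ} (hc : c = 0 ∨ c = 1) (x : Fin n → ℝ) :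
    psi A (Fin.cons c x) ≤ psi (proj A) x + 1 := by
  have hpr : (proj A).Nonempty := hA.image _
  rw [psi_def (proj A) x]
  have key : ∀ d2 ∈ {d : ℝ | ∃ s ∈ convexHull ℝ ((proj A : Finset _) : Set (Fin n → ℝ)),
      d = ∑ i, (x i - s i) ^ 2},
      psi A (Fin.cons c x) ≤ 1 * d2 + 1 := by
    rintro d2 ⟨s, hs, rfl⟩
    obtain ⟨p, hp, hps⟩ := lift_proj hs
    have h0 := coord_mem_Icc hAΩ hp
    have hle := psi_le (t := (Fin.cons c x : Fin (n+1) → ℝ)) hp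
    have hsum : ∑ i, ((Fin.cons c x : Fin (n+1) → ℝ) i - p i) ^ 2
        = (c - p 0) ^ 2 + ∑ j : Fin n, (x j - s j) ^ 2 := by
      have es : ∀ j : Fin n, (Fin.cons c x : Fin (n+1) → ℝ) j.succ - p j.succ
          = x j - s j := by
        intro j
        have hpj : p j.succ = s j := by rw [← hps]; rfl
        simp [hpj]
      have e0 : (Fin.cons c x : Fin (n+1) → ℝ) 0 - p 0 = c - p 0 := by simp
      rw [Fin.sum_univ_succ, e0]
      exact congrArg _ (Finset.sum_congr rfl fun j _ => by rw [es j])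
    have h0' : (c - p 0) ^ 2 ≤ 1 := by
      obtain ⟨hp0, hp1⟩ := h0
      rcases hc with rfl | rfl <;> nlinarith
    linarith
  have := le_mul_sInf (by norm_num : (0:ℝ) ≤ 1) (psi_set_nonempty hpr x)
    (psi_set_bddBelow _ x) key
  linarith




lemma hoelder_sum {ι : Type*} (X : Finset ι) (p f g : ι → ℝ)
    (hp : ∀ i ∈ X, 0 ≤ p i) (hf : ∀ i ∈ X, 0 < f i) (hg : ∀ i ∈ X, 0 < g i)
    {l : ℝ} (hl : 0 ≤ l) (hl1 : l ≤ 1)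
    (hF : 0 < ∑ i ∈ X, p i * f i) (hG : 0 < ∑ i ∈ X, p i * g i) :
    ∑ i ∈ X, p i * (f i ^ l * g i ^ (1 - l))
      ≤ (∑ i ∈ X, p i * f i) ^ l * (∑ i ∈ X, p i * g i) ^ (1 - l) := by
  set F := ∑ i ∈ X, p i * f i with hFdef
  set G := ∑ i ∈ X, p i * g i with hGdef
  set K := F ^ l * G ^ (1 - l) with hK
  have hKpos : 0 < K := mul_pos (rpow_pos_of_pos hF _) (rpow_pos_of_pos hG _)
  have hpt : ∀ i ∈ X, p i * (f i ^ l * g i ^ (1 - l))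
      ≤ (K * l / F) * (p i * f i) + (K * (1 - l) / G) * (p i * g i) := by
    intro i hi
    have hfi := hf i hi
    have hgi := hg i hi
    have hgm := Real.geom_mean_le_arith_mean2_weighted hl (by linarith : (0:ℝ) ≤ 1 - l)
      (le_of_lt (div_pos hfi hF)) (le_of_lt (div_pos hgi hG)) (by ring)
    have heq : (f i / F) ^ l * (g i / G) ^ (1 - l) = f i ^ l * g i ^ (1 - l) / K := by
      rw [Real.div_rpow hfi.le hF.le, Real.div_rpow hgi.le hG.le, hK]
      field_simp
    rw [heq] at hgm
    have h2 : f i ^ l * g i ^ (1 - l) ≤ K * (l * (f i / F) + (1 - l) * (g i / G)) :=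
      (div_le_iff₀' hKpos).1 hgm
    calc p i * (f i ^ l * g i ^ (1 - l))
        ≤ p i * (K * (l * (f i / F) + (1 - l) * (g i / G))) :=
          mul_le_mul_of_nonneg_left h2 (hp i hi)
      _ = (K * l / F) * (p i * f i) + (K * (1 - l) / G) * (p i * g i) := by
          field_simp
  calc ∑ i ∈ X, p i * (f i ^ l * g i ^ (1 - l))
      ≤ ∑ i ∈ X, ((K * l / F) * (p i * f i) + (K * (1 - l) / G) * (p i * g i)) :=
        Finset.sum_le_sum hpt
    _ = (K * l / F) * F + (K * (1 - l) / G) * G := by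
        rw [Finset.sum_add_distrib, ← Finset.mul_sum, ← Finset.mul_sum, ← hFdef, ← hGdef]
    _ = K := by field_simp; ring

lemma exp_quarter_lt : Real.exp (1 / 4) < 1.3 := by
  have h4 : Real.exp (1 / 4) ^ (4 : ℕ) = Real.exp 1 := by
    rw [← Real.exp_nat_mul]; norm_num
  by_contra h
  push_neg at h
  have := pow_le_pow_left₀ (by norm_num : (0:ℝ) ≤ 1.3) h 4
  rw [h4] at this
  have he := Real.exp_one_lt_d9
  norm_num at this
  linarith

lemma calculus_key {r : ℝ} (hr0 : 0 < r) (hr1 : r ≤ 1) :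
    ∃ l, 0 ≤ l ∧ l ≤ 1 ∧ Real.exp ((1 - l) ^ 2 / 4) * r ^ (-l : ℝ) ≤ 2 - r := by
  rcases le_or_gt r 0.7 with hc | hc
  · refine ⟨0, le_refl _, zero_le_one, ?_⟩
    rw [neg_zero, Real.rpow_zero, mul_one]
    have := exp_quarter_lt
    norm_num
    nlinarith [exp_quarter_lt]
  · -- r > 0.7 : take l = 1 + 2 log r
    have hlogr : Real.log r ≤ 0 := Real.log_nonpos hr0.le hr1
    have hlog2 : -(1/2 : ℝ) < Real.log r := by
      rw [Real.lt_log_iff_exp_lt hr0]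
      calc Real.exp (-(1/2)) < 0.7 := by
            rw [Real.exp_neg]
            rw [inv_lt_comm₀ (Real.exp_pos _) (by norm_num)]
            have h2 : ((0.7:ℝ))⁻¹ ^ (2:ℕ) < Real.exp (1/2) ^ (2:ℕ) → (0.7:ℝ)⁻¹ < Real.exp (1/2) := by
              intro h
              nlinarith [Real.exp_pos (1/2 : ℝ), inv_pos.2 (show (0:ℝ) < 0.7 by norm_num)]
            apply h2
            rw [← Real.exp_nat_mul]
            norm_num
            nlinarith [Real.exp_one_gt_d9]
        _ < r := hc
    set t : ℝ := -Real.log r with htdef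
    have ht0 : 0 ≤ t := by simp [htdef]; linarith
    have ht12 : t < 1/2 := by simp [htdef]; linarith
    refine ⟨1 - 2 * t, by linarith, by linarith, ?_⟩
    have hrt : r = Real.exp (-t) := by
      rw [htdef, neg_neg, Real.exp_log hr0]
    have hrpow : r ^ (-(1 - 2*t) : ℝ) = Real.exp (-(1 - 2*t) * Real.log r) := by
      rw [Real.rpow_def_of_pos hr0]; ring_nf
    have hexp : Real.exp ((1 - (1 - 2*t)) ^ 2 / 4) * r ^ (-(1 - 2*t) : ℝ)
        = Real.exp (t - t ^ 2) := by
      rw [hrpow, ← Real.exp_add]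
      congr 1
      have : Real.log r = -t := by rw [htdef]; ring
      rw [this]
      ring
    rw [hexp, hrt]
    -- now : exp (t - t^2) ≤ 2 - exp (-t),   0 ≤ t < 1/2
    set x : ℝ := t - t ^ 2 with hxdef
    have hx0 : 0 ≤ x := by nlinarith
    have hx1 : x ≤ 1 := by nlinarith
    -- upper bound for exp x
    have hxbound : Real.exp x ≤ 1 + x + x ^ 2 / 2 + 2 / 9 * x ^ 3 := by
      have h := Real.exp_bound (x := x) (by rw [abs_of_nonneg hx0]; exact hx1) (by norm_num : 0 < 3)
      rw [abs_of_nonneg hx0] at h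
      have h2 := (abs_sub_le_iff.1 h).1
      have h3 : ∑ m ∈ Finset.range 3, x ^ m / m.factorial = 1 + x + x ^ 2 / 2 := by
        simp [Finset.sum_range_succ, Nat.factorial]
        try ring
      rw [h3] at h2
      simp only [Nat.factorial] at h2
      norm_num at h2 ⊢
      linarith
    -- upper bound for exp (-t)
    have htbound : Real.exp (-t) ≤ 1 - t + t ^ 2 / 2 + 2 / 9 * t ^ 3 := by
      have habs : |(-t : ℝ)| ≤ 1 := by rw [abs_neg, abs_of_nonneg ht0]; linarith
      have h := Real.exp_bound (x := -t) habs (by norm_num : 0 < 3)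
      have h2 := (abs_sub_le_iff.1 h).1
      have h3 : ∑ m ∈ Finset.range 3, (-t) ^ m / m.factorial = 1 - t + t ^ 2 / 2 := by
        simp [Finset.sum_range_succ, Nat.factorial]
        try ring
      rw [h3] at h2
      have h4 : |(-t : ℝ)| ^ 3 = t ^ 3 := by
        rw [abs_neg, abs_of_nonneg ht0]
      rw [h4] at h2
      simp only [Nat.factorial] at h2
      norm_num at h2 ⊢
      linarith
    -- polynomial inequality
    have hpoly : 1 + x + x ^ 2 / 2 + 2 / 9 * x ^ 3
        ≤ 2 - (1 - t + t ^ 2 / 2 + 2 / 9 * t ^ 3) := by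
      rw [hxdef]
      have hcube : (1 - t) ^ 3 ≤ 1 := by nlinarith [sq_nonneg t, sq_nonneg (1 - t)]
      have hfac : 0 ≤ 7/9 - t/2 - 2/9 * (1 - t)^3 := by nlinarith [hcube, ht12, ht0]
      nlinarith [mul_nonneg (pow_nonneg ht0 3) hfac]
    linarith
  done



lemma cube_nonempty (n : ℕ) : (cube n).Nonempty :=
  Fintype.piFinset_nonempty.2 fun _ => ⟨0, by simp⟩

lemma wgt_pos {η : ℝ} (hη0 : 0 < η) (hη1 : η < 1) (t : Fin n → ℝ) : 0 < wgt η t := by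
  refine Finset.prod_pos fun i _ => ?_
  rcases eq_or_ne (t i) 1 with h | h
  · rw [if_pos h]; exact hη0
  · rw [if_neg h]; linarith

lemma cons_mem_cube {c : ℝ} (hc : c = 0 ∨ c = 1) {x : Fin n → ℝ} (hx : x ∈ cube n) :
    (Fin.cons c x : Fin (n + 1) → ℝ) ∈ cube (n + 1) := by
  rw [cube, Fintype.mem_piFinset]
  intro i
  refine Fin.cases ?_ (fun j => ?_) i
  · rcases hc with rfl | rfl <;> simp
  · rw [Fin.cons_succ]
    exact Fintype.mem_piFinset.1 hx j

lemma tail_mem_cube {t : Fin (n + 1) → ℝ} (ht : t ∈ cube (n + 1)) : Fin.tail t ∈ cube n := by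
  rw [cube, Fintype.mem_piFinset] at ht ⊢
  intro j
  exact ht j.succ

lemma proj_subset_cube {A : Finset (Fin (n + 1) → ℝ)} (hAΩ : A ⊆ cube (n + 1)) :
    proj A ⊆ cube n := by
  intro u hu
  obtain ⟨t, ht, rfl⟩ := Finset.mem_image.1 hu
  exact tail_mem_cube (hAΩ ht)

lemma slice_subset_proj (c : ℝ) (A : Finset (Fin (n + 1) → ℝ)) : slice c A ⊆ proj A :=
  Finset.image_subset_image (Finset.filter_subset _ _)

lemma wgt_cons (η c : ℝ) (x : Fin n → ℝ) :
    wgt η (Fin.cons c x : Fin (n + 1) → ℝ) = (if c = 1 then η else 1 - η) * wgt η x := by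
  rw [wgt, Fin.prod_univ_succ]
  simp [wgt]

lemma sum_cube_succ (F : (Fin (n + 1) → ℝ) → ℝ) :
    ∑ t ∈ cube (n + 1), F t
      = (∑ x ∈ cube n, F (Fin.cons 0 x)) + ∑ x ∈ cube n, F (Fin.cons 1 x) := by
  have hdecomp : cube (n + 1)
      = ((cube n).image (fun x => (Fin.cons 0 x : Fin (n+1) → ℝ)))
        ∪ ((cube n).image (fun x => (Fin.cons 1 x : Fin (n+1) → ℝ))) := by
    ext t
    simp only [Finset.mem_union, Finset.mem_image]
    constructor
    · intro ht
      have h0 : t 0 = 0 ∨ t 0 = 1 := by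
        have := Fintype.mem_piFinset.1 ht 0
        simpa using this
      rcases h0 with h | h
      · exact Or.inl ⟨Fin.tail t, tail_mem_cube ht, by rw [← h, Fin.cons_self_tail]⟩
      · exact Or.inr ⟨Fin.tail t, tail_mem_cube ht, by rw [← h, Fin.cons_self_tail]⟩
    · rintro (⟨x, hx, rfl⟩ | ⟨x, hx, rfl⟩)
      · exact cons_mem_cube (Or.inl rfl) hx
      · exact cons_mem_cube (Or.inr rfl) hx
  have hdisj : Disjoint ((cube n).image (fun x => (Fin.cons 0 x : Fin (n+1) → ℝ)))
      ((cube n).image (fun x => (Fin.cons 1 x : Fin (n+1) → ℝ))) := by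
    rw [Finset.disjoint_left]
    rintro t ht0 ht1
    obtain ⟨x, _, rfl⟩ := Finset.mem_image.1 ht0
    obtain ⟨y, _, hy⟩ := Finset.mem_image.1 ht1
    have : (Fin.cons 1 y : Fin (n+1) → ℝ) 0 = (Fin.cons 0 x : Fin (n+1) → ℝ) 0 := by rw [hy]
    simp at this
  rw [hdecomp, Finset.sum_union hdisj,
    Finset.sum_image (fun a _ b _ h => Fin.cons_right_injective _ h),
    Finset.sum_image (fun a _ b _ h => Fin.cons_right_injective _ h)]

lemma sum_wgt_split {η : ℝ} {A : Finset (Fin (n + 1) → ℝ)} (hAΩ : A ⊆ cube (n + 1)) :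
    ∑ t ∈ A, wgt η t
      = (1 - η) * (∑ u ∈ slice 0 A, wgt η u) + η * (∑ u ∈ slice 1 A, wgt η u) := by
  have hinj : ∀ c : ℝ, ∀ a ∈ A.filter (fun t => t 0 = c), ∀ b ∈ A.filter (fun t => t 0 = c),
      Fin.tail a = Fin.tail b → a = b := by
    intro c a ha b hb hab
    have ha' := (Finset.mem_filter.1 ha).2
    have hb' := (Finset.mem_filter.1 hb).2
    rw [← Fin.cons_self_tail a, ← Fin.cons_self_tail b, ha', hb', hab]
  have hslice : ∀ c : ℝ, ∑ u ∈ slice c A, wgt η u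
      = ∑ t ∈ A.filter (fun t => t 0 = c), wgt η (Fin.tail t) := by
    intro c
    rw [slice, Finset.sum_image (hinj c)]
  have hfilter : A.filter (fun t => ¬ t 0 = 1) = A.filter (fun t => t 0 = 0) := by
    ext t
    simp only [Finset.mem_filter, and_congr_right_iff]
    intro ht
    have h0 : t 0 = 0 ∨ t 0 = 1 := by
      have := Fintype.mem_piFinset.1 (hAΩ ht) 0
      simpa using this
    constructor
    · intro h; rcases h0 with h' | h'; exact h'; exact absurd h' h
    · intro h; rw [h]; norm_num
  rw [← Finset.sum_filter_add_sum_filter_not A (fun t => t 0 = 1), hfilter,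
    hslice 0, hslice 1]
  have hw : ∀ c : ℝ, ∀ t ∈ A.filter (fun t => t 0 = c),
      wgt η t = (if c = 1 then η else 1 - η) * wgt η (Fin.tail t) := by
    intro c t ht
    have hc := (Finset.mem_filter.1 ht).2
    conv_lhs => rw [← Fin.cons_self_tail t]
    rw [wgt_cons, hc]
  rw [Finset.sum_congr rfl (hw 1), Finset.sum_congr rfl (hw 0)]
  norm_num
  rw [← Finset.mul_sum, ← Finset.mul_sum]
  ring

lemma exp_rpow' (y z : ℝ) : Real.exp y ^ (z : ℝ) = Real.exp (y * z) := by
  rw [Real.rpow_def_of_pos (Real.exp_pos y), Real.log_exp]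


lemma slice_subset_cube {A : Finset (Fin (n + 1) → ℝ)} (hAΩ : A ⊆ cube (n + 1)) (c : ℝ) :
    slice c A ⊆ cube n :=
  (slice_subset_proj c A).trans (proj_subset_cube hAΩ)

theorem talagrand_prod (η : ℝ) (hη0 : 0 < η) (hη1 : η < 1) :
    ∀ (n : ℕ) (A : Finset (Fin n → ℝ)), A.Nonempty → A ⊆ cube n →
    (∑ t ∈ cube n, wgt η t * Real.exp (psi A t / 4)) * (∑ t ∈ A, wgt η t) ≤ 1 := by
  intro n
  induction n with
  | zero =>
    intro A hA hAΩ
    have hcard : (cube 0).card = 1 := by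
      rw [cube, Fintype.card_piFinset]
      simp
    have hAeq : A = cube 0 :=
      Finset.eq_of_subset_of_card_le hAΩ (by rw [hcard]; exact hA.card_pos)
    obtain ⟨t0, ht0⟩ := Finset.card_eq_one.1 hcard
    subst hAeq
    rw [ht0, Finset.sum_singleton, Finset.sum_singleton]
    have hw : wgt η t0 = 1 := by
      rw [wgt]
      simp
    have hpsi : psi {t0} t0 = 0 := by
      refine le_antisymm ?_ (psi_nonneg ⟨t0, by simp⟩ t0)
      have h := psi_le (A := ({t0} : Finset (Fin 0 → ℝ))) (t := t0) (s := t0)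
        (subset_convexHull ℝ _
          (by simp : t0 ∈ (({t0} : Finset (Fin 0 → ℝ)) : Set (Fin 0 → ℝ))))
      simpa using h
    rw [hpsi, hw]
    norm_num
  | succ n ih =>
    intro A hA hAΩ
    set B := proj A with hBdef
    have hB : B.Nonempty := hA.image _
    have hBΩ : B ⊆ cube n := proj_subset_cube hAΩ
    set PB := ∑ u ∈ B, wgt η u with hPBdef
    have hPB : 0 < PB := Finset.sum_pos (fun u _ => wgt_pos hη0 hη1 u) hB
    set SB := ∑ x ∈ cube n, wgt η x * Real.exp (psi B x / 4) with hSBdef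
    have hSB : 0 < SB :=
      Finset.sum_pos (fun x _ => mul_pos (wgt_pos hη0 hη1 x) (Real.exp_pos _))
        (cube_nonempty n)
    have hSBle : SB ≤ 1 / PB := by
      rw [le_div_iff₀ hPB]
      exact ih B hB hBΩ
    have key : ∀ c : ℝ, c = 0 ∨ c = 1 →
        (∑ x ∈ cube n, wgt η x * Real.exp (psi A (Fin.cons c x) / 4))
          ≤ (2 - (∑ u ∈ slice c A, wgt η u) / PB) / PB := by
      intro c hc
      set Pc := ∑ u ∈ slice c A, wgt η u with hPcdef
      by_cases hsl : (slice c A).Nonempty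
      · -- nonempty slice
        have hPc : 0 < Pc := Finset.sum_pos (fun u _ => wgt_pos hη0 hη1 u) hsl
        have hPcPB : Pc ≤ PB :=
          Finset.sum_le_sum_of_subset_of_nonneg (slice_subset_proj c A)
            (fun u _ _ => (wgt_pos hη0 hη1 u).le)
        have hr0 : 0 < Pc / PB := div_pos hPc hPB
        have hr1 : Pc / PB ≤ 1 := (div_le_one hPB).2 hPcPB
        obtain ⟨l, hl0, hl1, hcal⟩ := calculus_key hr0 hr1
        set Sc := ∑ x ∈ cube n, wgt η x * Real.exp (psi (slice c A) x / 4) with hScdef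
        have hSc : 0 < Sc :=
          Finset.sum_pos (fun x _ => mul_pos (wgt_pos hη0 hη1 x) (Real.exp_pos _))
            (cube_nonempty n)
        have hScle : Sc ≤ 1 / Pc := by
          rw [le_div_iff₀ hPc]
          exact ih (slice c A) hsl (slice_subset_cube hAΩ c)
        -- pointwise bound then Hölder
        have hpt : ∀ x ∈ cube n,
            wgt η x * Real.exp (psi A (Fin.cons c x) / 4)
              ≤ Real.exp ((1 - l) ^ 2 / 4) *
                (wgt η x * (Real.exp (psi (slice c A) x / 4) ^ (l : ℝ) *
                  Real.exp (psi B x / 4) ^ (1 - l : ℝ))) := by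
          intro x _
          have hcomb := psi_combine hAΩ hc hl0 hl1 hsl x
          have hexp : Real.exp (psi A (Fin.cons c x) / 4)
              ≤ Real.exp ((1 - l) ^ 2 / 4) * (Real.exp (psi (slice c A) x / 4) ^ (l : ℝ) *
                Real.exp (psi B x / 4) ^ (1 - l : ℝ)) := by
            rw [exp_rpow', exp_rpow', ← Real.exp_add, ← Real.exp_add]
            apply Real.exp_le_exp.2
            rw [hBdef]
            linarith
          calc wgt η x * Real.exp (psi A (Fin.cons c x) / 4)
              ≤ wgt η x * (Real.exp ((1 - l) ^ 2 / 4) *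
                  (Real.exp (psi (slice c A) x / 4) ^ (l : ℝ) *
                    Real.exp (psi B x / 4) ^ (1 - l : ℝ))) :=
                mul_le_mul_of_nonneg_left hexp (wgt_pos hη0 hη1 x).le
            _ = _ := by ring
        have hhold := hoelder_sum (cube n) (wgt η) 
          (fun x => Real.exp (psi (slice c A) x / 4))
          (fun x => Real.exp (psi B x / 4))
          (fun x _ => (wgt_pos hη0 hη1 x).le)
          (fun x _ => Real.exp_pos _) (fun x _ => Real.exp_pos _) hl0 hl1
          (by rw [← hScdef]; exact hSc) (by rw [← hSBdef]; exact hSB)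
        have step1 : (∑ x ∈ cube n, wgt η x * Real.exp (psi A (Fin.cons c x) / 4))
            ≤ Real.exp ((1 - l) ^ 2 / 4) * (Sc ^ (l : ℝ) * SB ^ (1 - l : ℝ)) := by
          calc (∑ x ∈ cube n, wgt η x * Real.exp (psi A (Fin.cons c x) / 4))
              ≤ ∑ x ∈ cube n, Real.exp ((1 - l) ^ 2 / 4) *
                  (wgt η x * (Real.exp (psi (slice c A) x / 4) ^ (l : ℝ) *
                    Real.exp (psi B x / 4) ^ (1 - l : ℝ))) := Finset.sum_le_sum hpt
            _ = Real.exp ((1 - l) ^ 2 / 4) *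
                ∑ x ∈ cube n, wgt η x * (Real.exp (psi (slice c A) x / 4) ^ (l : ℝ) *
                  Real.exp (psi B x / 4) ^ (1 - l : ℝ)) := by rw [← Finset.mul_sum]
            _ ≤ Real.exp ((1 - l) ^ 2 / 4) * (Sc ^ (l : ℝ) * SB ^ (1 - l : ℝ)) := by
                apply mul_le_mul_of_nonneg_left _ (Real.exp_pos _).le
                rw [hScdef, hSBdef]
                exact hhold
        have hmono : Sc ^ (l : ℝ) * SB ^ (1 - l : ℝ)
            ≤ (1 / Pc) ^ (l : ℝ) * (1 / PB) ^ (1 - l : ℝ) := by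
          apply mul_le_mul
          · exact Real.rpow_le_rpow hSc.le hScle hl0
          · exact Real.rpow_le_rpow hSB.le hSBle (by linarith)
          · exact (Real.rpow_pos_of_pos hSB _).le
          · exact (Real.rpow_pos_of_pos (by positivity) _).le
        have hid : (1 / Pc) ^ (l : ℝ) * (1 / PB) ^ (1 - l : ℝ)
            = (Pc / PB) ^ (-l : ℝ) / PB := by
          have hlhs : (1 / Pc) ^ (l : ℝ) * (1 / PB) ^ (1 - l : ℝ)
              = Real.exp (-Real.log Pc * l + -Real.log PB * (1 - l)) := by
            rw [Real.rpow_def_of_pos (by positivity : (0:ℝ) < 1 / Pc),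
              Real.rpow_def_of_pos (by positivity : (0:ℝ) < 1 / PB),
              ← Real.exp_add, one_div, one_div, Real.log_inv, Real.log_inv]
          have hrhs : (Pc / PB) ^ (-l : ℝ) / PB
              = Real.exp (Real.log (Pc / PB) * (-l) + -Real.log PB) := by
            rw [Real.rpow_def_of_pos hr0, Real.exp_add, Real.exp_neg,
              Real.exp_log hPB, div_eq_mul_inv]
          rw [hlhs, hrhs, Real.log_div hPc.ne' hPB.ne']
          congr 1
          ring
        have step2 : Real.exp ((1 - l) ^ 2 / 4) * ((Pc / PB) ^ (-l : ℝ) / PB)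
            ≤ (2 - Pc / PB) / PB := by
          rw [← mul_div_assoc]
          gcongr
        calc (∑ x ∈ cube n, wgt η x * Real.exp (psi A (Fin.cons c x) / 4))
            ≤ Real.exp ((1 - l) ^ 2 / 4) * (Sc ^ (l : ℝ) * SB ^ (1 - l : ℝ)) := step1
          _ ≤ Real.exp ((1 - l) ^ 2 / 4) * ((1 / Pc) ^ (l : ℝ) * (1 / PB) ^ (1 - l : ℝ)) :=
              mul_le_mul_of_nonneg_left hmono (Real.exp_pos _).le
          _ = Real.exp ((1 - l) ^ 2 / 4) * ((Pc / PB) ^ (-l : ℝ) / PB) := by rw [hid]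
          _ ≤ (2 - Pc / PB) / PB := step2
      · -- empty slice
        have hPc0 : Pc = 0 := by
          rw [hPcdef, Finset.not_nonempty_iff_eq_empty.1 hsl, Finset.sum_empty]
        have hpt : ∀ x ∈ cube n,
            wgt η x * Real.exp (psi A (Fin.cons c x) / 4)
              ≤ Real.exp (1 / 4) * (wgt η x * Real.exp (psi B x / 4)) := by
          intro x _
          have hcomb := psi_proj_bound hA hAΩ hc x
          have hexp : Real.exp (psi A (Fin.cons c x) / 4)
              ≤ Real.exp (1 / 4) * Real.exp (psi B x / 4) := by
            rw [← Real.exp_add]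
            apply Real.exp_le_exp.2
            rw [hBdef]
            linarith
          calc wgt η x * Real.exp (psi A (Fin.cons c x) / 4)
              ≤ wgt η x * (Real.exp (1 / 4) * Real.exp (psi B x / 4)) :=
                mul_le_mul_of_nonneg_left hexp (wgt_pos hη0 hη1 x).le
            _ = _ := by ring
        calc (∑ x ∈ cube n, wgt η x * Real.exp (psi A (Fin.cons c x) / 4))
            ≤ ∑ x ∈ cube n, Real.exp (1 / 4) * (wgt η x * Real.exp (psi B x / 4)) :=
              Finset.sum_le_sum hpt
          _ = Real.exp (1 / 4) * SB := by rw [← Finset.mul_sum, hSBdef]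
          _ ≤ Real.exp (1 / 4) * (1 / PB) :=
              mul_le_mul_of_nonneg_left hSBle (Real.exp_pos _).le
          _ ≤ (2 - Pc / PB) / PB := by
              rw [hPc0, zero_div, sub_zero, mul_one_div]
              gcongr
              linarith [exp_quarter_lt]
    -- assemble
    have hT0 := key 0 (Or.inl rfl)
    have hT1 := key 1 (Or.inr rfl)
    set T0 := ∑ x ∈ cube n, wgt η x * Real.exp (psi A (Fin.cons 0 x) / 4) with hT0def
    set T1 := ∑ x ∈ cube n, wgt η x * Real.exp (psi A (Fin.cons 1 x) / 4) with hT1def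
    set P0 := ∑ u ∈ slice 0 A, wgt η u with hP0def
    set P1 := ∑ u ∈ slice 1 A, wgt η u with hP1def
    have hdec : ∑ t ∈ cube (n+1), wgt η t * Real.exp (psi A t / 4)
        = (1 - η) * T0 + η * T1 := by
      rw [sum_cube_succ (fun t => wgt η t * Real.exp (psi A t / 4))]
      have e0 : ∑ x ∈ cube n, wgt η (Fin.cons 0 x : Fin (n+1) → ℝ) *
          Real.exp (psi A (Fin.cons 0 x) / 4) = (1 - η) * T0 := by
        rw [hT0def, Finset.mul_sum]
        refine Finset.sum_congr rfl fun x _ => ?_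
        rw [wgt_cons]
        norm_num
        ring
      have e1 : ∑ x ∈ cube n, wgt η (Fin.cons 1 x : Fin (n+1) → ℝ) *
          Real.exp (psi A (Fin.cons 1 x) / 4) = η * T1 := by
        rw [hT1def, Finset.mul_sum]
        refine Finset.sum_congr rfl fun x _ => ?_
        rw [wgt_cons]
        norm_num
        ring
      rw [e0, e1]
    have hsplit : ∑ t ∈ A, wgt η t = (1 - η) * P0 + η * P1 := sum_wgt_split hAΩ
    rw [hdec, hsplit]
    -- pure arithmetic
    have hP0nn : 0 ≤ P0 := Finset.sum_nonneg fun u _ => (wgt_pos hη0 hη1 u).le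
    have hP1nn : 0 ≤ P1 := Finset.sum_nonneg fun u _ => (wgt_pos hη0 hη1 u).le
    have hP0PB : P0 ≤ PB := Finset.sum_le_sum_of_subset_of_nonneg (slice_subset_proj 0 A)
      (fun u _ _ => (wgt_pos hη0 hη1 u).le)
    have hP1PB : P1 ≤ PB := Finset.sum_le_sum_of_subset_of_nonneg (slice_subset_proj 1 A)
      (fun u _ _ => (wgt_pos hη0 hη1 u).le)
    set S := (1 - η) * P0 + η * P1 with hSdef
    have hSnn : 0 ≤ S := by
      have := mul_nonneg (by linarith : (0:ℝ) ≤ 1 - η) hP0nn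
      have := mul_nonneg hη0.le hP1nn
      rw [hSdef]; linarith
    have hSPB : S ≤ PB := by
      rw [hSdef]
      nlinarith [mul_le_mul_of_nonneg_left hP0PB (by linarith : (0:ℝ) ≤ 1 - η),
        mul_le_mul_of_nonneg_left hP1PB hη0.le]
    have hfirst : (1 - η) * T0 + η * T1 ≤ (2 - S / PB) / PB := by
      have b0 : (1 - η) * T0 ≤ (1 - η) * ((2 - P0 / PB) / PB) :=
        mul_le_mul_of_nonneg_left hT0 (by linarith)
      have b1 : η * T1 ≤ η * ((2 - P1 / PB) / PB) :=
        mul_le_mul_of_nonneg_left hT1 hη0.le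
      have e : (1 - η) * ((2 - P0 / PB) / PB) + η * ((2 - P1 / PB) / PB)
          = (2 - S / PB) / PB := by
        rw [hSdef]
        field_simp
        ring
      linarith
    have hm1 : S / PB ≤ 1 := (div_le_one hPB).2 hSPB
    have hm0 : 0 ≤ S / PB := div_nonneg hSnn hPB.le
    calc ((1 - η) * T0 + η * T1) * S ≤ ((2 - S / PB) / PB) * S :=
          mul_le_mul_of_nonneg_right hfirst hSnn
      _ = (2 - S / PB) * (S / PB) := by
          rw [div_mul_eq_mul_div, mul_div_assoc]
      _ ≤ 1 := by nlinarith [sq_nonneg (1 - S / PB)]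

lemma sq_sInf_sqrt {A : Finset (Fin n → ℝ)} (hA : A.Nonempty) (t : Fin n → ℝ) :
    (sInf {d : ℝ | ∃ s ∈ convexHull ℝ (A : Set (Fin n → ℝ)),
      d = Real.sqrt (∑ i, (t i - s i) ^ 2)}) ^ 2 = psi A t := by
  have himg : {d : ℝ | ∃ s ∈ convexHull ℝ (A : Set (Fin n → ℝ)),
        d = Real.sqrt (∑ i, (t i - s i) ^ 2)}
      = Real.sqrt '' {d : ℝ | ∃ s ∈ convexHull ℝ (A : Set (Fin n → ℝ)),
        d = ∑ i, (t i - s i) ^ 2} := by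
    ext d
    constructor
    · rintro ⟨s, hs, rfl⟩
      exact ⟨_, ⟨s, hs, rfl⟩, rfl⟩
    · rintro ⟨y, ⟨s, hs, rfl⟩, rfl⟩
      exact ⟨s, hs, rfl⟩
  rw [himg, ← Monotone.map_csInf_of_continuousAt (Real.continuous_sqrt.continuousAt)
    (fun a b h => Real.sqrt_le_sqrt h) (psi_set_nonempty hA t) (psi_set_bddBelow A t)]
  exact Real.sq_sqrt (psi_nonneg hA t)

end TalaWork

/-- Talagrand's convex-hull inequality on `{0,1}ⁿ` with the biased product
measure `((1-η)δ₀ + ηδ₁)ⁿ`, Euclidean distance to the convex hull. -/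
theorem stmt_7 (n : ℕ) (η : ℝ) (hη0 : 0 < η) (hη1 : η < 1)
    (A : Finset (Fin n → ℝ)) (hA : A.Nonempty)
    (hAΩ : A ⊆ Fintype.piFinset fun _ => ({0, 1} : Finset ℝ)) :
    ∑ t ∈ Fintype.piFinset (fun _ : Fin n => ({0, 1} : Finset ℝ)),
        (∏ i, if t i = 1 then η else 1 - η) *
          Real.exp ((sInf {d : ℝ | ∃ s ∈ convexHull ℝ (A : Set (Fin n → ℝ)),
            d = Real.sqrt (∑ i, (t i - s i) ^ 2)}) ^ 2 / 4)
      ≤ 1 / ∑ t ∈ A, ∏ i, if t i = 1 then η else 1 - η := by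
  have hEq : ∀ t : Fin n → ℝ,
      (sInf {d : ℝ | ∃ s ∈ convexHull ℝ (A : Set (Fin n → ℝ)),
        d = Real.sqrt (∑ i, (t i - s i) ^ 2)}) ^ 2 = TalaWork.psi A t :=
    fun t => TalaWork.sq_sInf_sqrt hA t
  have hP : 0 < ∑ t ∈ A, ∏ i, if t i = 1 then η else 1 - η :=
    Finset.sum_pos (fun t _ => TalaWork.wgt_pos hη0 hη1 t) hA
  rw [le_div_iff₀ hP]
  simp only [hEq]
  exact TalaWork.talagrand_prod η hη0 hη1 n A hA hAΩ
end

section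
/- Under the hypotheses of Corollary 4 (f convex and Lipschitz with constant σₚ on conv Ω, P a product probability), for all c > 0: P(|f − E f| > c) ≤ 8·exp(−cᵖ/(32·σₚᵖ)). -/
/-!
Talagrand's convex distance inequality `E[exp (d(·, conv A)² / 4)] · P(A) ≤ 1` is proved by
induction on the number of factors: the distance from `(z, ω)` to `conv A` is interpolated between
the distance from `z` to the hull of the `ω`-slice of `A` and that to the hull of its projection,
and Hölder's inequality with a well-chosen exponent closes the induction.

Apply it to the sublevel set `A = {f ≤ a}`. Convexity of `f` puts `conv A` inside `{f ≤ a}`, so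
the Lipschitz bound, together with `‖·‖ ^ p ≤ ‖·‖ ^ 2` on factors of diameter at most `1`, gives
`d(x, conv A)² ≥ (d / σ) ^ p` whenever `f x ≥ a + d`; hence
`P(f ≥ a + d) · P(f ≤ a) ≤ exp (-(d / σ) ^ p / 4)`. With `a = E f - c` this is an exponential tail
for `(f - E f)⁺`, whose expectation equals that of `(E f - f)⁺`; Markov's inequality then gives
`P(f ≤ E f - c) ^ 2 ≤ exp (-c ^ p / (4 σ ^ p))` once `c ^ p ≥ 4 σ ^ p`. The upper tail is
symmetric, and for small `c` the claimed bound exceeds `1`.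
-/

open Real Finset

namespace Talagrand

lemma exp_le_cubic {x : ℝ} (hx : |x| ≤ 1) :
    exp x ≤ 1 + x + x ^ 2 / 2 + 2 / 9 * |x| ^ 3 := by
  have h := abs_sub_le_iff.mp (Real.exp_bound hx (n := 3) (by norm_num))
  norm_num [Finset.sum_range_succ, Nat.factorial] at h
  linarith [h.1]

lemma exp_sub_sq_add_exp_neg_le_two {s : ℝ} (hs0 : 0 ≤ s) (hs1 : s ≤ 1 / 2) :
    exp (s - s ^ 2) + exp (-s) ≤ 2 := by
  have h₁ := exp_le_cubic (x := s - s ^ 2) (by rw [abs_le]; constructor <;> nlinarith)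
  have h₂ := exp_le_cubic (x := -s) (by rw [abs_neg, abs_le]; constructor <;> linarith)
  rw [abs_of_nonneg (by nlinarith)] at h₁
  rw [abs_neg, abs_of_nonneg hs0] at h₂
  have hcubic : 0 ≤ s ^ 3 * (7 / 9 - s / 2 - 2 / 9 * (1 - s) ^ 3) :=
    mul_nonneg (by positivity)
      (by nlinarith [pow_le_one₀ (n := 3) (by linarith : 0 ≤ 1 - s) (by linarith)])
  nlinarith [hcubic]

lemma exp_quarter_le : exp (1 / 4) ≤ 4 / 3 := by
  have h := Real.exp_bound_div_one_sub_of_interval (x := 1 / 4) (by norm_num) (by norm_num)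
  norm_num at h ⊢
  exact h

/-- Talagrand's choice: `l = 0` for `r ≤ 2 / 3`, and `l = 1 + 2 log r` otherwise. -/
lemma exists_exp_mul_rpow_neg_le {r : ℝ} (h0 : 0 < r) (h1 : r ≤ 1) :
    ∃ l ∈ Set.Icc (0 : ℝ) 1, exp ((1 - l) ^ 2 / 4) * r ^ (-l) ≤ 2 - r := by
  rcases le_or_gt r (2 / 3) with hr | hr
  · refine ⟨0, by norm_num, ?_⟩
    norm_num
    linarith [exp_quarter_le]
  set s := -log r
  have hr_eq : r = exp (-s) := by simp [s, exp_log h0]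
  have hs0 : 0 ≤ s := by simp only [s, neg_nonneg]; exact log_nonpos h0.le h1
  have hs1 : s ≤ 1 / 2 := by
    by_contra! h
    have : r * exp (1 / 2) < 1 := by
      rw [hr_eq, ← exp_add, exp_lt_one_iff]
      linarith
    nlinarith [add_one_le_exp (1 / 2 : ℝ)]
  refine ⟨1 - 2 * s, ⟨by linarith, by linarith⟩, ?_⟩
  rw [hr_eq, ← exp_mul, ← exp_add]
  have := exp_sub_sq_add_exp_neg_le_two hs0 hs1
  convert (show exp (s - s ^ 2) ≤ 2 - exp (-s) by linarith) using 2
  ring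

lemma sum_rpow_mul_rpow_le {ι : Type*} (s : Finset ι) {u v : ι → ℝ}
    (hu : ∀ i ∈ s, 0 ≤ u i) (hv : ∀ i ∈ s, 0 ≤ v i) {l : ℝ} (hl : l ∈ Set.Icc (0 : ℝ) 1) :
    ∑ i ∈ s, u i ^ l * v i ^ (1 - l) ≤ (∑ i ∈ s, u i) ^ l * (∑ i ∈ s, v i) ^ (1 - l) := by
  rcases hl.1.eq_or_lt with rfl | hl0
  · simp
  rcases hl.2.eq_or_lt with rfl | hl1
  · simp
  have hpq := Real.HolderConjugate.inv_one_sub_inv hl0 hl1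
  convert inner_le_Lp_mul_Lq_of_nonneg s hpq (fun i hi => rpow_nonneg (hu i hi) l)
    (fun i hi => rpow_nonneg (hv i hi) (1 - l)) using 3
  · exact sum_congr rfl fun i hi => (rpow_rpow_inv (hu i hi) hl0.ne').symm
  · rw [one_div, inv_inv]
  · exact sum_congr rfl fun i hi => (rpow_rpow_inv (hv i hi) (by linarith)).symm
  · rw [one_div, inv_inv]

lemma sum_mul_exp_le_of_le_interp {ι : Type*} {s : Finset ι} {W F G H : ι → ℝ}
    (hW : ∀ i ∈ s, 0 ≤ W i) {l c : ℝ} (hl : l ∈ Set.Icc (0 : ℝ) 1)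
    (hF : ∀ i ∈ s, F i ≤ l * G i + (1 - l) * H i + c) :
    ∑ i ∈ s, W i * exp (F i) ≤
      exp c * ((∑ i ∈ s, W i * exp (G i)) ^ l * (∑ i ∈ s, W i * exp (H i)) ^ (1 - l)) := by
  have hpoint : ∀ i ∈ s, W i * exp (F i) ≤
      exp c * ((W i * exp (G i)) ^ l * (W i * exp (H i)) ^ (1 - l)) := by
    intro i hi
    have hW_split : W i ^ l * W i ^ (1 - l) = W i := by
      rw [← rpow_add' (hW i hi) (by norm_num)]; norm_num
    rw [mul_rpow (hW i hi) (exp_pos _).le, mul_rpow (hW i hi) (exp_pos _).le, ← exp_mul,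
      ← exp_mul]
    calc W i * exp (F i) ≤ W i * exp (l * G i + (1 - l) * H i + c) :=
          mul_le_mul_of_nonneg_left (exp_le_exp.mpr (hF i hi)) (hW i hi)
      _ = exp c * (W i ^ l * exp (G i * l) * (W i ^ (1 - l) * exp (H i * (1 - l)))) := by
          rw [mul_comm (G i), mul_comm (H i), exp_add, exp_add]
          nth_rewrite 1 [← hW_split]
          ring
  calc ∑ i ∈ s, W i * exp (F i)
      ≤ ∑ i ∈ s, exp c * ((W i * exp (G i)) ^ l * (W i * exp (H i)) ^ (1 - l)) :=
        sum_le_sum hpoint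
    _ ≤ _ := by
        rw [← mul_sum]
        exact mul_le_mul_of_nonneg_left (sum_rpow_mul_rpow_le s
          (fun i hi => mul_nonneg (hW i hi) (exp_pos _).le)
          (fun i hi => mul_nonneg (hW i hi) (exp_pos _).le) hl) (exp_pos _).le

/-- Discrete layer-cake summation: peel off the least value `v > u` of `g`, using
`(g - u)⁺ = (g - v)⁺ + (v - u) · 𝟙[v ≤ g]` on `s` and `1 + β (v - u) ≤ exp (β (v - u))`. -/
lemma sum_mul_max_sub_le_of_tail_le {α : Type*} {s : Finset α} {W g : α → ℝ} {C β : ℝ}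
    (hC : 0 ≤ C) (hβ : 0 < β)
    (htail : ∀ u, 0 < u → ∑ x ∈ s with u ≤ g x, W x ≤ C * exp (-(β * u))) {u : ℝ} (hu : 0 ≤ u) :
    ∑ x ∈ s, W x * max (g x - u) 0 ≤ C / β * exp (-(β * u)) := by
  induction hk : #{x ∈ s | u < g x} using Nat.strong_induction_on generalizing u with
  | _ k ih =>
    rcases {x ∈ s | u < g x}.eq_empty_or_nonempty with hempty | hne
    · have hzero : ∑ x ∈ s, W x * max (g x - u) 0 = 0 := by
        refine sum_eq_zero fun x hx => ?_
        have : ¬ u < g x := fun h => by simpa using hempty.subset (mem_filter.mpr ⟨hx, h⟩)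
        rw [max_eq_right (by linarith), mul_zero]
      rw [hzero]
      positivity
    obtain ⟨x₀, hx₀, hmin⟩ := exists_min_image _ g hne
    set v := g x₀
    have huv : u < v := (mem_filter.mp hx₀).2
    have hcard : #{x ∈ s | v < g x} < k := by
      rw [← hk]
      refine card_lt_card ((ssubset_iff_of_subset fun x hx => ?_).mpr ⟨x₀, hx₀, by simp [v]⟩)
      simp only [mem_filter] at hx ⊢
      exact ⟨hx.1, huv.trans hx.2⟩
    have hsplit : ∑ x ∈ s, W x * max (g x - u) 0 =
        ∑ x ∈ s, W x * max (g x - v) 0 + (v - u) * ∑ x ∈ s with v ≤ g x, W x := by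
      rw [sum_filter, mul_sum, ← sum_add_distrib]
      refine sum_congr rfl fun x hx => ?_
      by_cases hgx : u < g x
      · have hvx : v ≤ g x := hmin x (mem_filter.mpr ⟨hx, hgx⟩)
        rw [if_pos hvx, max_eq_left (by linarith), max_eq_left (by linarith)]
        ring
      · rw [if_neg (by linarith), max_eq_right (by linarith), max_eq_right (by linarith)]
        ring
    calc ∑ x ∈ s, W x * max (g x - u) 0
        ≤ C / β * exp (-(β * v)) + (v - u) * (C * exp (-(β * v))) := by
          rw [hsplit]
          exact add_le_add (ih _ hcard (by linarith) rfl)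
            (mul_le_mul_of_nonneg_left (htail v (by linarith)) (by linarith))
      _ = C / β * exp (-(β * v)) * (β * (v - u) + 1) := by field_simp; ring
      _ ≤ C / β * exp (-(β * v)) * exp (β * (v - u)) := by gcongr; exact add_one_le_exp _
      _ = C / β * exp (-(β * u)) := by rw [mul_assoc, ← exp_add]; ring_nf

lemma inv_rpow_mul_inv_rpow_mul_self {a b : ℝ} (ha : 0 < a) (hb : 0 < b) (l : ℝ) :
    a⁻¹ ^ l * b⁻¹ ^ (1 - l) * b = (a / b) ^ (-l) := by
  rw [rpow_neg (div_pos ha hb).le, div_rpow ha.le hb.le, inv_rpow ha.le, inv_rpow hb.le,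
    rpow_sub hb, rpow_one]
  field_simp

/-- One induction step of Talagrand's convex distance inequality, in abstract form: `F`, `G`, `H`
play the squared distances to the hull of `A`, of a slice of `A` and of the projection of `A`. -/
lemma sum_mul_exp_mul_le_two_sub {ι : Type*} {s : Finset ι} {W F G H : ι → ℝ}
    (hW : ∀ i ∈ s, 0 ≤ W i) {a b : ℝ} (ha : 0 ≤ a) (hab : a ≤ b)
    (hG : (∑ i ∈ s, W i * exp (G i / 4)) * a ≤ 1) (hH : (∑ i ∈ s, W i * exp (H i / 4)) * b ≤ 1)
    (hF₀ : ∀ i ∈ s, F i ≤ H i + 1)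
    (hF : 0 < a → ∀ l ∈ Set.Icc (0 : ℝ) 1, ∀ i ∈ s, F i ≤ l * G i + (1 - l) * H i + (1 - l) ^ 2) :
    (∑ i ∈ s, W i * exp (F i / 4)) * b ≤ 2 - a / b := by
  rcases ha.eq_or_lt with rfl | ha
  · have hT := sum_mul_exp_le_of_le_interp hW (l := 0) (c := 1 / 4) (F := fun i => F i / 4)
      (G := fun i => G i / 4) (H := fun i => H i / 4) (by norm_num)
      fun i hi => by linarith [hF₀ i hi]
    norm_num at hT ⊢
    calc (∑ i ∈ s, W i * exp (F i / 4)) * b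
        ≤ exp (1 / 4) * ((∑ i ∈ s, W i * exp (H i / 4)) * b) := by
          rw [← mul_assoc]; exact mul_le_mul_of_nonneg_right hT (by linarith)
      _ ≤ 2 := by nlinarith [exp_quarter_le, exp_pos (1 / 4)]
  have hb : 0 < b := ha.trans_le hab
  obtain ⟨l, hl, hlr⟩ := exists_exp_mul_rpow_neg_le (div_pos ha hb) ((div_le_one hb).mpr hab)
  have hT := sum_mul_exp_le_of_le_interp hW hl (c := (1 - l) ^ 2 / 4) (F := fun i => F i / 4)
    (G := fun i => G i / 4) (H := fun i => H i / 4) fun i hi => by linarith [hF ha l hl i hi]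
  have hGa : ∑ i ∈ s, W i * exp (G i / 4) ≤ a⁻¹ := by rw [← one_div, le_div_iff₀ ha]; exact hG
  have hHb : ∑ i ∈ s, W i * exp (H i / 4) ≤ b⁻¹ := by rw [← one_div, le_div_iff₀ hb]; exact hH
  have hTG : 0 ≤ ∑ i ∈ s, W i * exp (G i / 4) :=
    sum_nonneg fun i hi => mul_nonneg (hW i hi) (exp_pos _).le
  have hTH : 0 ≤ ∑ i ∈ s, W i * exp (H i / 4) :=
    sum_nonneg fun i hi => mul_nonneg (hW i hi) (exp_pos _).le
  calc (∑ i ∈ s, W i * exp (F i / 4)) * b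
      ≤ exp ((1 - l) ^ 2 / 4) * (a⁻¹ ^ l * b⁻¹ ^ (1 - l)) * b := by
        gcongr
        refine hT.trans ?_
        gcongr
        · exact hl.1
        · linarith [hl.2]
    _ = exp ((1 - l) ^ 2 / 4) * (a / b) ^ (-l) := by
        rw [mul_assoc, inv_rpow_mul_inv_rpow_mul_self ha hb]
    _ ≤ 2 - a / b := hlr

lemma mul_le_one_of_mul_le_two_sub_div {T a b : ℝ} (ha : 0 ≤ a) (hab : a ≤ b)
    (h : T * b ≤ 2 - a / b) : T * a ≤ 1 := by
  rcases (ha.trans hab).eq_or_lt with rfl | hb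
  · simp [le_antisymm hab ha]
  have hρ : 0 ≤ a / b := div_nonneg ha hb.le
  calc T * a = T * b * (a / b) := by field_simp
    _ ≤ (2 - a / b) * (a / b) := mul_le_mul_of_nonneg_right h hρ
    _ ≤ 1 := by nlinarith [sq_nonneg (1 - a / b)]

lemma norm_sub_combo_sq_le {E : Type*} [NormedAddCommGroup E] [NormedSpace ℝ E] (a b c : E)
    {l : ℝ} (hl : l ∈ Set.Icc (0 : ℝ) 1) :
    ‖a - (l • b + (1 - l) • c)‖ ^ 2 ≤ l * ‖a - b‖ ^ 2 + (1 - l) * ‖a - c‖ ^ 2 := by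
  have h := ((convexOn_univ_dist a).pow (fun _ _ => dist_nonneg) 2).2 (Set.mem_univ b)
    (Set.mem_univ c) hl.1 (show 0 ≤ 1 - l by linarith [hl.2]) (by ring)
  simpa [dist_eq_norm, norm_sub_rev] using h

lemma norm_sub_le_diam_of_mem_convexHull {E : Type*} [NormedAddCommGroup E] [NormedSpace ℝ E]
    {s : Finset E} {a b : E} (ha : a ∈ convexHull ℝ (s : Set E))
    (hb : b ∈ convexHull ℝ (s : Set E)) : ‖a - b‖ ≤ Metric.diam (s : Set E) := by
  rw [← dist_eq_norm, ← convexHull_diam]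
  exact Metric.dist_le_diam_of_mem (isBounded_convexHull.mpr s.finite_toSet.isBounded) ha hb

section Hull

variable {ι : Type*} [Fintype ι] {X : ι → Type*} [∀ i, NormedAddCommGroup (X i)]
  [∀ i, NormedSpace ℝ (X i)]

lemma apply_mem_convexHull_of_mem_convexHull_piFinset [DecidableEq ι] {Ω : ∀ i, Finset (X i)}
    {x : ∀ i, X i}
    (hx : x ∈ convexHull ℝ (Fintype.piFinset Ω : Set (∀ i, X i))) (i : ι) :
    x i ∈ convexHull ℝ (Ω i : Set (X i)) := by
  have hmem : x i ∈ convexHull ℝ (LinearMap.proj (R := ℝ) (φ := X) i '' Fintype.piFinset Ω) :=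
    (LinearMap.proj (R := ℝ) (φ := X) i).image_convexHull _ ▸ ⟨x, hx, rfl⟩
  refine convexHull_mono ?_ hmem
  rintro _ ⟨y, hy, rfl⟩
  exact Fintype.mem_piFinset.mp hy i

lemma norm_sub_apply_le_diam [DecidableEq ι] {Ω : ∀ i, Finset (X i)} {A : Finset (∀ i, X i)}
    (hA : A ⊆ Fintype.piFinset Ω) {w : ∀ i, X i} (hw : w ∈ convexHull ℝ (A : Set (∀ i, X i)))
    {i : ι} {ω : X i} (hω : ω ∈ Ω i) : ‖ω - w i‖ ≤ Metric.diam (Ω i : Set (X i)) :=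
  norm_sub_le_diam_of_mem_convexHull (subset_convexHull ℝ _ hω)
    (apply_mem_convexHull_of_mem_convexHull_piFinset
      (convexHull_mono (Finset.coe_subset.mpr hA) hw) i)

/-- `d(x, conv A)²` for the `ℓ²`-sum of the norms of the factors; it is `0` for `A = ∅`, since
`sInf ∅ = 0`. -/
noncomputable def sqDistHull (A : Finset (∀ i, X i)) (x : ∀ i, X i) : ℝ :=
  sInf ((fun y => ∑ i, ‖x i - y i‖ ^ 2) '' convexHull ℝ (A : Set (∀ i, X i)))

lemma sqDistHull_le {A : Finset (∀ i, X i)} {x y : ∀ i, X i}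
    (hy : y ∈ convexHull ℝ (A : Set (∀ i, X i))) : sqDistHull A x ≤ ∑ i, ‖x i - y i‖ ^ 2 :=
  csInf_le ⟨0, by rintro _ ⟨z, -, rfl⟩; positivity⟩ ⟨y, hy, rfl⟩

lemma exists_sqDistHull_eq {A : Finset (∀ i, X i)} (hA : A.Nonempty) (x : ∀ i, X i) :
    ∃ y ∈ convexHull ℝ (A : Set (∀ i, X i)), sqDistHull A x = ∑ i, ‖x i - y i‖ ^ 2 := by
  obtain ⟨y, hy, hmin⟩ := (A.finite_toSet.isCompact_convexHull (𝕜 := ℝ)).exists_isMinOn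
    hA.to_set.convexHull
      (by fun_prop : Continuous fun y : ∀ i, X i => ∑ i, ‖x i - y i‖ ^ 2).continuousOn
  refine ⟨y, hy, le_antisymm (sqDistHull_le hy) (le_csInf ⟨_, y, hy, rfl⟩ ?_)⟩
  rintro _ ⟨z, hz, rfl⟩
  exact hmin hz

end Hull

section Moments

variable {ι : Type*} [Fintype ι] {X : ι → Type*}

def prodMass (P : ∀ i, X i → ℝ) (A : Finset (∀ i, X i)) : ℝ := ∑ x ∈ A, ∏ i, P i (x i)

lemma prodMass_nonneg {P : ∀ i, X i → ℝ} (hP0 : ∀ i x, 0 ≤ P i x) (A : Finset (∀ i, X i)) :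
    0 ≤ prodMass P A :=
  sum_nonneg fun x _ => prod_nonneg fun i _ => hP0 i (x i)

lemma prodMass_piFinset [DecidableEq ι] {Ω : ∀ i, Finset (X i)} {P : ∀ i, X i → ℝ}
    (hP1 : ∀ i, ∑ x ∈ Ω i, P i x = 1) : prodMass P (Fintype.piFinset Ω) = 1 := by
  rw [prodMass, ← prod_univ_sum]
  simp [hP1]

lemma prodMass_le_one [DecidableEq ι] {Ω : ∀ i, Finset (X i)} {P : ∀ i, X i → ℝ}
    (hP0 : ∀ i x, 0 ≤ P i x) (hP1 : ∀ i, ∑ x ∈ Ω i, P i x = 1) {A : Finset (∀ i, X i)}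
    (hA : A ⊆ Fintype.piFinset Ω) : prodMass P A ≤ 1 :=
  prodMass_piFinset hP1 ▸
    sum_le_sum_of_subset_of_nonneg hA fun x _ _ => prod_nonneg fun i _ => hP0 i (x i)

noncomputable def expHullMoment [DecidableEq ι] [∀ i, NormedAddCommGroup (X i)]
    [∀ i, NormedSpace ℝ (X i)] (Ω : ∀ i, Finset (X i)) (P : ∀ i, X i → ℝ)
    (A : Finset (∀ i, X i)) : ℝ :=
  ∑ x ∈ Fintype.piFinset Ω, (∏ i, P i (x i)) * exp (sqDistHull A x / 4)

end Moments

section Step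

variable {n : ℕ} {X : Fin (n + 1) → Type*}

lemma sum_piFinset_prod_mul_eq_sum_snoc (Ω : ∀ i, Finset (X i)) (P : ∀ i, X i → ℝ)
    (h : (∀ i, X i) → ℝ) :
    ∑ x ∈ Fintype.piFinset Ω, (∏ i, P i (x i)) * h x =
      ∑ ω ∈ Ω (Fin.last n), P (Fin.last n) ω *
        ∑ z ∈ Fintype.piFinset (Fin.init Ω), (∏ j, Fin.init P j (z j)) * h (Fin.snoc z ω) := by
  have hpi := Finset.filter_piFinset_eq_map_snocEquiv Ω (fun _ => True)
  simp only [filter_true] at hpi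
  rw [hpi, sum_map, sum_product]
  refine sum_congr rfl fun ω _ => ?_
  rw [mul_sum]
  refine sum_congr rfl fun z _ => ?_
  have hsnoc : Fin.snocEquiv X (ω, z) = Fin.snoc z ω := rfl
  simp only [Equiv.coe_toEmbedding, hsnoc, Fin.prod_univ_castSucc, Fin.snoc_castSucc, Fin.snoc_last,
    Fin.init]
  ring

lemma prodMass_eq_sum_snoc [DecidableEq (∀ i, X i)] {Ω : ∀ i, Finset (X i)}
    {A : Finset (∀ i, X i)} (P : ∀ i, X i → ℝ) (hA : A ⊆ Fintype.piFinset Ω) :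
    prodMass P A = ∑ ω ∈ Ω (Fin.last n), P (Fin.last n) ω *
      prodMass (Fin.init P) {z ∈ Fintype.piFinset (Fin.init Ω) | Fin.snoc z ω ∈ A} := by
  have h := sum_piFinset_prod_mul_eq_sum_snoc Ω P (fun x => if x ∈ A then 1 else 0)
  simp only [mul_ite, mul_one, mul_zero, ← sum_filter, filter_mem_eq_inter,
    inter_eq_right.mpr hA] at h
  exact h

variable [∀ i, NormedAddCommGroup (X i)] [∀ i, NormedSpace ℝ (X i)]

lemma snoc_add_smul {y₁ y₂ : ∀ j : Fin n, X j.castSucc} (ω : X (Fin.last n)) {a b : ℝ}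
    (hab : a + b = 1) :
    (Fin.snoc (a • y₁ + b • y₂) ω : ∀ i, X i) = a • Fin.snoc y₁ ω + b • Fin.snoc y₂ ω := by
  ext i
  refine Fin.lastCases ?_ (fun j => ?_) i <;> simp [← add_smul, hab]

lemma snoc_mem_convexHull {A : Finset (∀ i, X i)} {S : Finset (∀ j : Fin n, X j.castSucc)}
    {ω : X (Fin.last n)} (hS : ∀ z ∈ S, Fin.snoc z ω ∈ A) {y : ∀ j : Fin n, X j.castSucc}
    (hy : y ∈ convexHull ℝ (S : Set (∀ j : Fin n, X j.castSucc))) :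
    (Fin.snoc y ω : ∀ i, X i) ∈ convexHull ℝ (A : Set (∀ i, X i)) := by
  refine convexHull_min (t := {y | (Fin.snoc y ω : ∀ i, X i) ∈ convexHull ℝ (A : Set (∀ i, X i))})
    (fun z hz => subset_convexHull ℝ _ (hS z hz)) ?_ hy
  intro y₁ h₁ y₂ h₂ a b ha hb hab
  simp only [Set.mem_ofPred_eq, snoc_add_smul ω hab] at h₁ h₂ ⊢
  exact convex_convexHull ℝ _ h₁ h₂ ha hb hab

lemma exists_init_eq_of_mem_convexHull_image [DecidableEq (∀ j : Fin n, X j.castSucc)]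
    {A : Finset (∀ i, X i)} {y : ∀ j : Fin n, X j.castSucc}
    (hy : y ∈ convexHull ℝ (A.image Fin.init : Set (∀ j : Fin n, X j.castSucc))) :
    ∃ w ∈ convexHull ℝ (A : Set (∀ i, X i)), Fin.init w = y := by
  let init : (∀ i, X i) →ₗ[ℝ] ∀ j : Fin n, X j.castSucc :=
    { toFun := Fin.init, map_add' := fun _ _ => rfl, map_smul' := fun _ _ => rfl }
  rw [coe_image, show (Fin.init '' A : Set _) = init '' A from rfl, ← init.image_convexHull] at hy
  exact hy

variable {Ω : ∀ i, Finset (X i)} {A : Finset (∀ i, X i)} {ω : X (Fin.last n)}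

lemma sqDistHull_snoc_le_add_one [DecidableEq (∀ j : Fin n, X j.castSucc)]
    (hdiam : Metric.diam (Ω (Fin.last n) : Set (X (Fin.last n))) ≤ 1)
    (hA : A ⊆ Fintype.piFinset Ω) (hAne : A.Nonempty) (hω : ω ∈ Ω (Fin.last n))
    (z : ∀ j : Fin n, X j.castSucc) :
    sqDistHull A (Fin.snoc z ω) ≤ sqDistHull (A.image Fin.init) z + 1 := by
  obtain ⟨y, hy, hyB⟩ := exists_sqDistHull_eq (hAne.image Fin.init) z
  obtain ⟨w, hw, rfl⟩ := exists_init_eq_of_mem_convexHull_image hy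
  have hlast := (norm_sub_apply_le_diam hA hw hω).trans hdiam
  refine (sqDistHull_le hw).trans ?_
  rw [hyB, Fin.sum_univ_castSucc]
  simp only [Fin.snoc_castSucc, Fin.snoc_last]
  exact add_le_add le_rfl (pow_le_one₀ (norm_nonneg _) hlast)

/-- Interpolating between a point of the hull of the `ω`-slice `S` and a point of the hull of the
projection of `A` costs at most `(1 - l) ^ 2` in the last coordinate. -/
lemma sqDistHull_snoc_le_interp [DecidableEq (∀ j : Fin n, X j.castSucc)]
    (hdiam : Metric.diam (Ω (Fin.last n) : Set (X (Fin.last n))) ≤ 1)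
    (hA : A ⊆ Fintype.piFinset Ω) (hω : ω ∈ Ω (Fin.last n)) {S : Finset (∀ j : Fin n, X j.castSucc)}
    (hS : ∀ z ∈ S, Fin.snoc z ω ∈ A) (hSne : S.Nonempty) {l : ℝ} (hl : l ∈ Set.Icc (0 : ℝ) 1)
    (z : ∀ j : Fin n, X j.castSucc) :
    sqDistHull A (Fin.snoc z ω) ≤
      l * sqDistHull S z + (1 - l) * sqDistHull (A.image Fin.init) z + (1 - l) ^ 2 := by
  obtain ⟨a, ha⟩ := hSne
  obtain ⟨y, hy, hyS⟩ := exists_sqDistHull_eq ⟨a, ha⟩ z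
  obtain ⟨y', hy', hyB⟩ := exists_sqDistHull_eq ⟨_, mem_image_of_mem Fin.init (hS a ha)⟩ z
  obtain ⟨w, hw, rfl⟩ := exists_init_eq_of_mem_convexHull_image hy'
  have hl' : 0 ≤ 1 - l := by linarith [hl.2]
  have hlast := (norm_sub_apply_le_diam hA hw hω).trans hdiam
  have hu : l • (Fin.snoc y ω : ∀ i, X i) + (1 - l) • w ∈ convexHull ℝ (A : Set (∀ i, X i)) :=
    convex_convexHull ℝ _ (snoc_mem_convexHull hS hy) hw hl.1 hl' (by ring)
  refine (sqDistHull_le hu).trans ?_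
  rw [hyS, hyB, Fin.sum_univ_castSucc, mul_sum, mul_sum, ← sum_add_distrib]
  simp only [Pi.add_apply, Pi.smul_apply, Fin.snoc_castSucc, Fin.snoc_last]
  gcongr with j
  · exact norm_sub_combo_sq_le _ _ _ hl
  · rw [show ω - (l • ω + (1 - l) • w (Fin.last n)) = (1 - l) • (ω - w (Fin.last n)) by module,
      norm_smul, Real.norm_of_nonneg hl']
    exact mul_le_of_le_one_right hl' hlast

theorem expHullMoment_mul_prodMass_le_one_of_init {P : ∀ i, X i → ℝ} (hP0 : ∀ i x, 0 ≤ P i x)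
    (hP1 : ∑ x ∈ Ω (Fin.last n), P (Fin.last n) x = 1)
    (hdiam : Metric.diam (Ω (Fin.last n) : Set (X (Fin.last n))) ≤ 1)
    (hA : A ⊆ Fintype.piFinset Ω)
    (ih : ∀ A' ⊆ Fintype.piFinset (Fin.init Ω),
      expHullMoment (Fin.init Ω) (Fin.init P) A' * prodMass (Fin.init P) A' ≤ 1) :
    expHullMoment Ω P A * prodMass P A ≤ 1 := by
  classical
  rcases A.eq_empty_or_nonempty with rfl | hAne
  · simp [prodMass]
  set B := A.image Fin.init
  set S := fun ω => {z ∈ Fintype.piFinset (Fin.init Ω) | Fin.snoc z ω ∈ A}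
  set μB := prodMass (Fin.init P) B
  have hB : B ⊆ Fintype.piFinset (Fin.init Ω) := fun z hz => by
    obtain ⟨x, hx, rfl⟩ := mem_image.mp hz
    exact (Fin.mem_piFinset_iff_last_init.mp (hA hx)).2
  have hSB : ∀ ω, prodMass (Fin.init P) (S ω) ≤ μB := fun ω =>
    sum_le_sum_of_subset_of_nonneg
      (fun z hz => mem_image.mpr ⟨_, (mem_filter.mp hz).2, Fin.init_snoc _ _⟩)
      fun z _ _ => prod_nonneg fun j _ => hP0 _ _
  have hAB : prodMass P A ≤ μB := by
    calc prodMass P A ≤ ∑ ω ∈ Ω (Fin.last n), P (Fin.last n) ω * μB := by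
          rw [prodMass_eq_sum_snoc P hA]; gcongr with ω; exacts [hP0 _ _, hSB ω]
      _ = μB := by rw [← sum_mul, hP1, one_mul]
  have hslice : ∀ ω ∈ Ω (Fin.last n),
      (∑ z ∈ Fintype.piFinset (Fin.init Ω), (∏ j, Fin.init P j (z j)) *
        exp (sqDistHull A (Fin.snoc z ω) / 4)) * μB ≤ 2 - prodMass (Fin.init P) (S ω) / μB :=
    fun ω hω => sum_mul_exp_mul_le_two_sub (fun z _ => prod_nonneg fun j _ => hP0 _ _)
      (prodMass_nonneg (fun _ _ => hP0 _ _) _) (hSB ω) (ih _ (filter_subset _ _)) (ih B hB)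
      (fun z _ => sqDistHull_snoc_le_add_one hdiam hA hAne hω z)
      (fun hpos l hl z _ => sqDistHull_snoc_le_interp hdiam hA hω
        (fun z hz => (mem_filter.mp hz).2) (nonempty_of_sum_ne_zero hpos.ne') hl z)
  refine mul_le_one_of_mul_le_two_sub_div (prodMass_nonneg hP0 A) hAB ?_
  rw [expHullMoment, sum_piFinset_prod_mul_eq_sum_snoc, sum_mul, prodMass_eq_sum_snoc P hA]
  calc _ ≤ ∑ ω ∈ Ω (Fin.last n), P (Fin.last n) ω * (2 - prodMass (Fin.init P) (S ω) / μB) :=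
        sum_le_sum fun ω hω => by
          rw [mul_assoc]; exact mul_le_mul_of_nonneg_left (hslice ω hω) (hP0 _ _)
    _ = 2 * ∑ ω ∈ Ω (Fin.last n), P (Fin.last n) ω -
          (∑ ω ∈ Ω (Fin.last n), P (Fin.last n) ω * prodMass (Fin.init P) (S ω)) / μB := by
        rw [sum_div, mul_sum, ← sum_sub_distrib]
        exact sum_congr rfl fun ω _ => by ring
    _ = _ := by rw [hP1, mul_one]

end Step

/-- Talagrand's convex distance inequality. -/
theorem expHullMoment_mul_prodMass_le_one {n : ℕ} {X : Fin n → Type*}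
    [∀ i, NormedAddCommGroup (X i)] [∀ i, NormedSpace ℝ (X i)] {Ω : ∀ i, Finset (X i)}
    {P : ∀ i, X i → ℝ} (hP0 : ∀ i x, 0 ≤ P i x) (hP1 : ∀ i, ∑ x ∈ Ω i, P i x = 1)
    (hdiam : ∀ i, Metric.diam (Ω i : Set (X i)) ≤ 1) {A : Finset (∀ i, X i)}
    (hA : A ⊆ Fintype.piFinset Ω) :
    expHullMoment Ω P A * prodMass P A ≤ 1 := by
  induction n with
  | zero =>
    rcases A.eq_empty_or_nonempty with rfl | ⟨a, ha⟩
    · simp [prodMass]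
    have hmoment : expHullMoment Ω P A ≤ 1 := by
      rw [expHullMoment, ← prodMass_piFinset hP1, prodMass]
      refine sum_le_sum fun x _ => mul_le_of_le_one_right (prod_nonneg fun i _ => hP0 i _) ?_
      have := sqDistHull_le (x := x) (subset_convexHull ℝ _ (mem_coe.mpr ha))
      simp only [univ_eq_empty, sum_empty] at this
      exact exp_le_one_iff.mpr (by linarith)
    exact mul_le_one₀ hmoment (prodMass_nonneg hP0 A) (prodMass_le_one hP0 hP1 hA)
  | succ n ih =>
    exact expHullMoment_mul_prodMass_le_one_of_init hP0 (hP1 _) (hdiam _) hA fun A' hA' =>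
      ih (fun _ _ => hP0 _ _) (fun _ => hP1 _) (fun _ => hdiam _) hA'

section Deviation

variable {α : Type*} {s : Finset α} {W g : α → ℝ}

lemma sum_mul_max_sub_mean_eq (hW1 : ∑ x ∈ s, W x = 1) :
    ∑ x ∈ s, W x * max (g x - ∑ y ∈ s, W y * g y) 0 =
      ∑ x ∈ s, W x * max (∑ y ∈ s, W y * g y - g x) 0 := by
  set E := ∑ y ∈ s, W y * g y
  have hcentered : ∑ x ∈ s, W x * (g x - E) = 0 := by
    simp only [mul_sub, sum_sub_distrib, ← sum_mul, hW1, one_mul, E, sub_self]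
  rw [← sub_eq_zero, ← sum_sub_distrib]
  refine (sum_congr rfl fun x _ => ?_).trans hcentered
  rw [← mul_sub, ← neg_sub (g x), max_zero_sub_max_neg_zero_eq_self]

/-- The weighted mean of `(g - E)⁺` is controlled by layer-cake summation, and it equals that of
`(E - g)⁺`, which by Markov's inequality is at least `c` times the mass below `E - c`. -/
lemma sum_filter_le_mean_sub_le_exp (hW : ∀ x ∈ s, 0 ≤ W x) (hW1 : ∑ x ∈ s, W x = 1)
    {β c : ℝ} (hc : 0 < c) (hβc : 1 ≤ β * c)
    (htwo : ∀ a d, c ≤ d →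
      (∑ x ∈ s with a + d ≤ g x, W x) * (∑ x ∈ s with g x ≤ a, W x) ≤ exp (-(β * d))) :
    ∑ x ∈ s with g x ≤ ∑ y ∈ s, W y * g y - c, W x ≤ exp (-(β * c) / 2) := by
  set E := ∑ y ∈ s, W y * g y
  set μ := ∑ x ∈ s with g x ≤ E - c, W x
  have hβ : 0 < β := pos_of_mul_pos_left (one_pos.trans_le hβc) hc.le
  have hμ : 0 ≤ μ := sum_nonneg fun x hx => hW x (mem_filter.mp hx).1
  have htail : ∀ u, 0 < u →
      ∑ x ∈ s with u ≤ g x - E, μ * W x ≤ exp (-(β * c)) * exp (-(β * u)) := by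
    intro u hu
    have h := htwo (E - c) (c + u) (by linarith)
    rw [← mul_sum, mul_comm, ← exp_add, show -(β * c) + -(β * u) = -(β * (c + u)) by ring]
    convert h using 3
    exact filter_congr fun x _ => by constructor <;> intro <;> linarith
  have hlayer := sum_mul_max_sub_le_of_tail_le (exp_pos _).le hβ htail le_rfl
  simp only [sub_zero, mul_zero, neg_zero, exp_zero, mul_one, mul_assoc, ← mul_sum] at hlayer
  have hmarkov : c * μ ≤ ∑ x ∈ s, W x * max (E - g x) 0 := by
    calc c * μ = ∑ x ∈ s with g x ≤ E - c, W x * c := by rw [mul_comm, sum_mul]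
      _ ≤ ∑ x ∈ s with g x ≤ E - c, W x * max (E - g x) 0 := by
          refine sum_le_sum fun x hx => ?_
          obtain ⟨hxs, hx⟩ := mem_filter.mp hx
          exact mul_le_mul_of_nonneg_left
            ((by linarith : c ≤ E - g x).trans (le_max_left _ _)) (hW x hxs)
      _ ≤ ∑ x ∈ s, W x * max (E - g x) 0 :=
          sum_le_sum_of_subset_of_nonneg (filter_subset _ _) fun x hx _ =>
            mul_nonneg (hW x hx) (le_max_right _ _)
  rw [sum_mul_max_sub_mean_eq hW1] at hlayer
  have hsq : μ ^ 2 ≤ exp (-(β * c) / 2) ^ 2 := by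
    rw [sq (exp _), ← exp_add, add_halves]
    have h1 : c * μ ^ 2 ≤ exp (-(β * c)) / β := by nlinarith [mul_le_mul_of_nonneg_left hmarkov hμ]
    have h2 : exp (-(β * c)) / β ≤ c * exp (-(β * c)) := by
      rw [div_le_iff₀ hβ]; nlinarith [exp_pos (-(β * c))]
    exact le_of_mul_le_mul_left (h1.trans h2) hc
  exact (pow_le_pow_iff_left₀ hμ (exp_pos _).le two_ne_zero).mp hsq

lemma sum_filter_mean_add_le_le_exp (hW : ∀ x ∈ s, 0 ≤ W x) (hW1 : ∑ x ∈ s, W x = 1)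
    {β c : ℝ} (hc : 0 < c) (hβc : 1 ≤ β * c)
    (htwo : ∀ a d, c ≤ d →
      (∑ x ∈ s with a + d ≤ g x, W x) * (∑ x ∈ s with g x ≤ a, W x) ≤ exp (-(β * d))) :
    ∑ x ∈ s with ∑ y ∈ s, W y * g y + c ≤ g x, W x ≤ exp (-(β * c) / 2) := by
  have h := sum_filter_le_mean_sub_le_exp (g := fun x => -g x) hW hW1 hc hβc fun a d hcd => by
    rw [mul_comm]
    convert htwo (-a - d) d hcd using 3 <;>
      exact filter_congr fun x _ => by constructor <;> intro <;> linarith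
  convert h using 2
  simp only [mul_neg, sum_neg_distrib]
  exact filter_congr fun x _ => by constructor <;> intro <;> linarith

lemma sum_ite_abs_sub_mean_gt_le_exp (hW : ∀ x ∈ s, 0 ≤ W x) (hW1 : ∑ x ∈ s, W x = 1)
    {β c : ℝ} (hc : 0 < c) (hβc : 1 ≤ β * c)
    (htwo : ∀ a d, c ≤ d →
      (∑ x ∈ s with a + d ≤ g x, W x) * (∑ x ∈ s with g x ≤ a, W x) ≤ exp (-(β * d))) :
    ∑ x ∈ s, (if |g x - ∑ y ∈ s, W y * g y| > c then W x else 0) ≤ 2 * exp (-(β * c) / 2) := by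
  set E := ∑ y ∈ s, W y * g y
  calc _ ≤ ∑ x ∈ s with g x ≤ E - c, W x + ∑ x ∈ s with E + c ≤ g x, W x := by
        rw [sum_filter, sum_filter, ← sum_add_distrib]
        refine sum_le_sum fun x hx => ?_
        have := hW x hx
        split_ifs with h₁ h₂ h₃ <;> try linarith
        rcases lt_abs.mp h₁ with h | h <;> linarith
    _ ≤ 2 * exp (-(β * c) / 2) := by
        linarith [sum_filter_le_mean_sub_le_exp hW hW1 hc hβc htwo,
          sum_filter_mean_add_le_le_exp hW hW1 hc hβc htwo]

end Deviation

lemma rpow_div_le_sqDistHull_of_add_le {n : ℕ} {X : Fin n → Type*}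
    [∀ i, NormedAddCommGroup (X i)] [∀ i, NormedSpace ℝ (X i)] {p : ℝ} (hp : 2 ≤ p)
    {Ω : ∀ i, Finset (X i)} (hdiam : ∀ i, Metric.diam (Ω i : Set (X i)) ≤ 1)
    {f : (∀ i, X i) → ℝ} {σ : ℝ} (hσ : 0 < σ)
    (hconv : ConvexOn ℝ (convexHull ℝ ↑(Fintype.piFinset Ω)) f)
    (hlip : ∀ x ∈ convexHull ℝ (↑(Fintype.piFinset Ω) : Set (∀ i, X i)),
      ∀ y ∈ convexHull ℝ (↑(Fintype.piFinset Ω) : Set (∀ i, X i)),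
      |f x - f y| ≤ σ * (∑ i, ‖x i - y i‖ ^ p) ^ (1 / p))
    {a d : ℝ} (hd : 0 ≤ d) (hAne : {x ∈ Fintype.piFinset Ω | f x ≤ a}.Nonempty)
    {x : ∀ i, X i} (hx : x ∈ Fintype.piFinset Ω) (hfx : a + d ≤ f x) :
    (d / σ) ^ p ≤ sqDistHull {x ∈ Fintype.piFinset Ω | f x ≤ a} x := by
  obtain ⟨y, hy, hxy⟩ := exists_sqDistHull_eq hAne x
  have hy' : y ∈ convexHull ℝ (↑(Fintype.piFinset Ω) : Set (∀ i, X i)) ∧ f y ≤ a :=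
    convexHull_min (t := {y ∈ convexHull ℝ _ | f y ≤ a})
      (fun y hy => ⟨subset_convexHull ℝ _ (mem_filter.mp hy).1, (mem_filter.mp hy).2⟩)
      (hconv.convex_le a) hy
  set S := ∑ i, ‖x i - y i‖ ^ p
  have hS : 0 ≤ S := by positivity
  have hdS : d / σ ≤ S ^ (1 / p) := by
    rw [div_le_iff₀' hσ]
    linarith [le_abs_self (f x - f y), hlip x (subset_convexHull ℝ _ hx) y hy'.1]
  calc (d / σ) ^ p ≤ (S ^ (1 / p)) ^ p := rpow_le_rpow (by positivity) hdS (by linarith)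
    _ = S := by rw [← rpow_mul hS, one_div_mul_cancel (by linarith), rpow_one]
    _ ≤ ∑ i, ‖x i - y i‖ ^ 2 := sum_le_sum fun i _ => by
        have h1 := (norm_sub_apply_le_diam (filter_subset _ _) hy
          (Fintype.mem_piFinset.mp hx i)).trans (hdiam i)
        rw [← rpow_natCast]
        exact rpow_le_rpow_of_exponent_ge' (norm_nonneg _) h1 (by norm_num) (by norm_cast)
    _ = _ := hxy.symm

theorem prodMass_mul_prodMass_le_exp {n : ℕ} {X : Fin n → Type*}
    [∀ i, NormedAddCommGroup (X i)] [∀ i, NormedSpace ℝ (X i)] {p : ℝ} (hp : 2 ≤ p)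
    {Ω : ∀ i, Finset (X i)} (hdiam : ∀ i, Metric.diam (Ω i : Set (X i)) ≤ 1)
    {P : ∀ i, X i → ℝ} (hP0 : ∀ i x, 0 ≤ P i x) (hP1 : ∀ i, ∑ x ∈ Ω i, P i x = 1)
    {f : (∀ i, X i) → ℝ} {σ : ℝ} (hσ : 0 < σ)
    (hconv : ConvexOn ℝ (convexHull ℝ ↑(Fintype.piFinset Ω)) f)
    (hlip : ∀ x ∈ convexHull ℝ (↑(Fintype.piFinset Ω) : Set (∀ i, X i)),
      ∀ y ∈ convexHull ℝ (↑(Fintype.piFinset Ω) : Set (∀ i, X i)),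
      |f x - f y| ≤ σ * (∑ i, ‖x i - y i‖ ^ p) ^ (1 / p))
    (a : ℝ) {d : ℝ} (hd : 0 ≤ d) :
    prodMass P {x ∈ Fintype.piFinset Ω | a + d ≤ f x} *
        prodMass P {x ∈ Fintype.piFinset Ω | f x ≤ a} ≤ exp (-((d / σ) ^ p) / 4) := by
  set A := {x ∈ Fintype.piFinset Ω | f x ≤ a}
  set far := {x ∈ Fintype.piFinset Ω | a + d ≤ f x}
  rcases A.eq_empty_or_nonempty with hAe | hAne
  · rw [hAe, prodMass, prodMass, sum_empty, mul_zero]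
    positivity
  have hmoment : exp ((d / σ) ^ p / 4) * prodMass P far ≤ expHullMoment Ω P A := by
    calc exp ((d / σ) ^ p / 4) * prodMass P far
        = ∑ x ∈ far, (∏ i, P i (x i)) * exp ((d / σ) ^ p / 4) := by
          rw [prodMass, mul_sum]; exact sum_congr rfl fun _ _ => mul_comm _ _
      _ ≤ ∑ x ∈ far, (∏ i, P i (x i)) * exp (sqDistHull A x / 4) :=
          sum_le_sum fun x hx => by
            obtain ⟨hx, hfx⟩ := mem_filter.mp hx
            gcongr
            · exact prod_nonneg fun i _ => hP0 i _
            · exact rpow_div_le_sqDistHull_of_add_le hp hdiam hσ hconv hlip hd hAne hx hfx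
      _ ≤ expHullMoment Ω P A :=
          sum_le_sum_of_subset_of_nonneg (filter_subset _ _) fun x _ _ =>
            mul_nonneg (prod_nonneg fun i _ => hP0 i _) (exp_pos _).le
  rw [neg_div, exp_neg, ← one_div, le_div_iff₀ (exp_pos _)]
  calc prodMass P far * prodMass P A * exp ((d / σ) ^ p / 4)
      = exp ((d / σ) ^ p / 4) * prodMass P far * prodMass P A := by ring
    _ ≤ expHullMoment Ω P A * prodMass P A :=
        mul_le_mul_of_nonneg_right hmoment (prodMass_nonneg hP0 A)
    _ ≤ 1 := expHullMoment_mul_prodMass_le_one hP0 hP1 hdiam (filter_subset _ _)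

lemma rpow_sub_one_div_mul_le {c d σ p : ℝ} (hc : 0 < c) (hcd : c ≤ d) (hσ : 0 < σ)
    (hp : 1 ≤ p) : c ^ (p - 1) / (4 * σ ^ p) * d ≤ (d / σ) ^ p / 4 := by
  have hd : 0 < d := hc.trans_le hcd
  rw [div_rpow hd.le hσ.le, div_mul_eq_mul_div, div_div, mul_comm (σ ^ p)]
  gcongr
  calc c ^ (p - 1) * d ≤ d ^ (p - 1) * d := by gcongr
    _ = d ^ p := by rw [← rpow_add_one hd.ne', sub_add_cancel]

end Talagrand

open Talagrand

/-- Corollary 4, inequality (9): deviation from the expectation for convex functions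
that are Lipschitz with constant `σ` in the ℓᵖ-sum norm, on a product space. -/
theorem stmt_11 {n : ℕ} {X : Fin n → Type*} [∀ i, NormedAddCommGroup (X i)]
    [∀ i, NormedSpace ℝ (X i)] (p : ℝ) (hp : 2 ≤ p)
    (Ω : ∀ i, Finset (X i))
    (hdiam : ∀ i, Metric.diam (Ω i : Set (X i)) ≤ 1)
    (P : ∀ i, X i → ℝ) (hP0 : ∀ i x, 0 ≤ P i x)
    (hP1 : ∀ i, ∑ x ∈ Ω i, P i x = 1)
    (f : (∀ i, X i) → ℝ) (σ : ℝ) (hσ : 0 ≤ σ)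
    (hconv : ConvexOn ℝ (convexHull ℝ ↑(Fintype.piFinset Ω)) f)
    (hlip : ∀ x ∈ convexHull ℝ (↑(Fintype.piFinset Ω) : Set (∀ i, X i)),
      ∀ y ∈ convexHull ℝ (↑(Fintype.piFinset Ω) : Set (∀ i, X i)),
      |f x - f y| ≤ σ * (∑ i, ‖x i - y i‖ ^ p) ^ (1/p))
    (c : ℝ) (hc : 0 < c) :
    ∑ t ∈ Fintype.piFinset Ω,
        (if |f t - ∑ u ∈ Fintype.piFinset Ω, (∏ i, P i (u i)) * f u| > c
          then ∏ i, P i (t i) else 0)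
      ≤ 8 * Real.exp (-(c ^ p) / (32 * σ ^ p)) := by
  have hW : ∀ t ∈ Fintype.piFinset Ω, 0 ≤ ∏ i, P i (t i) :=
    fun t _ => prod_nonneg fun i _ => hP0 i _
  have hW1 : ∑ t ∈ Fintype.piFinset Ω, ∏ i, P i (t i) = 1 := prodMass_piFinset hP1
  -- This case contains `σ = 0`, where the exponent is `0` because division by `0` gives `0`.
  by_cases htriv : 1 ≤ 8 * exp (-(c ^ p) / (32 * σ ^ p))
  · refine le_trans (hW1 ▸ sum_le_sum fun t ht => ?_) htriv
    split_ifs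
    exacts [le_rfl, hW t ht]
  rw [not_le, neg_div] at htriv
  have hratio : 7 / 8 < c ^ p / (32 * σ ^ p) := by
    linarith [add_one_le_exp (-(c ^ p / (32 * σ ^ p)))]
  have hσ' : 0 < σ := hσ.lt_of_ne fun h => by
    rw [← h, zero_rpow (by linarith), mul_zero, div_zero] at hratio
    linarith
  -- `β * d ≤ (d / σ) ^ p / 4` for `d ≥ c`, with equality at `d = c`.
  set β := c ^ (p - 1) / (4 * σ ^ p)
  have hβc : β * c = 8 * (c ^ p / (32 * σ ^ p)) := by
    rw [div_mul_eq_mul_div, ← rpow_add_one hc.ne', sub_add_cancel]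
    ring
  have htwo : ∀ a d, c ≤ d →
      prodMass P {x ∈ Fintype.piFinset Ω | a + d ≤ f x} *
        prodMass P {x ∈ Fintype.piFinset Ω | f x ≤ a} ≤ exp (-(β * d)) := fun a d hcd =>
    (prodMass_mul_prodMass_le_exp hp hdiam hP0 hP1 hσ' hconv hlip a (hc.le.trans hcd)).trans
      (exp_le_exp.mpr (by linarith [rpow_sub_one_div_mul_le hc hcd hσ' (by linarith : 1 ≤ p)]))
  calc _ ≤ 2 * exp (-(β * c) / 2) := sum_ite_abs_sub_mean_gt_le_exp hW hW1 hc (by linarith) htwo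
    _ ≤ 8 * exp (-(c ^ p) / (32 * σ ^ p)) := by
        rw [hβc, neg_div (32 * σ ^ p)]
        gcongr
        · norm_num
        · linarith
end
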